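/- arXiv:1207.5884 — 4 statements merged into one kernel-verified Lean document; each statement's English description precedes it below -/
import Mathlib

section
/- Fix n+1 distinct elements c_0,…,c_n of a field F and a polynomial map L = (L^1,…,L^n): F^q → F^n that is a generator for m-sparse low degree polynomials, and let S_{l,m} be the recursively defined polynomial maps built from L and c_0,…,c_n. Suppose P ∈ F[x_1,…,x_n] is a nonzero polynomial computed by a low degree unmixed ΣΠΣΠ(k) circuit of size s ≥ 2 with k ≥ 1. Then P(S_{k,m}) ≢ 0 for every m ≥ s^(5k²+2). -/
open MvPolynomial Finset

attribute [local instance 10] Classical.propDecidable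

/-- Embed a univariate polynomial as a multivariate polynomial in the variable `x j`. -/
noncomputable def toMv {F : Type*} [CommSemiring F] {n : ℕ} (j : Fin n) (f : Polynomial F) :
    MvPolynomial (Fin n) F :=
  Polynomial.aeval (X j) f

/-- The sparsity `‖P‖`: the number of monomials of `P` with nonzero coefficient. -/
def sparsity {F : Type*} [CommSemiring F] {n : ℕ} (P : MvPolynomial (Fin n) F) : ℕ :=
  P.support.card

/-- `‖P‖_A`: the number of distinct exponent vectors of monomials of `P` after setting
the exponents of the variables indexed by `A` to zero. -/
noncomputable def sparsityOn {F : Type*} [CommSemiring F] {n : ℕ} (A : Finset (Fin n))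
    (P : MvPolynomial (Fin n) F) : ℕ :=
  (P.support.image fun m => Finsupp.filter (fun j => j ∉ A) m).card

/-- Substitute `c` for the variable `x i`. -/
noncomputable def substAt {F : Type*} [CommSemiring F] {n : ℕ} (i : Fin n) (c : F)
    (P : MvPolynomial (Fin n) F) : MvPolynomial (Fin n) F :=
  aeval (fun j : Fin n => if j = i then MvPolynomial.C c else X j) P

/-- Substitute `a j` for `x j` for all `j < t` (for `t = 0` this is `P` itself). -/
noncomputable def substPrefix {F : Type*} [CommSemiring F] {n : ℕ} (t : ℕ) (a : Fin n → F)
    (P : MvPolynomial (Fin n) F) : MvPolynomial (Fin n) F :=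
  aeval (fun j : Fin n => if (j : ℕ) < t then MvPolynomial.C (a j) else X j) P

/-- The operator `D_{x i = c}(P, Q) = P·(Q|_{x i = c}) − (P|_{x i = c})·Q`. -/
noncomputable def Dop {F : Type*} [CommRing F] {n : ℕ} (i : Fin n) (c : F)
    (P Q : MvPolynomial (Fin n) F) : MvPolynomial (Fin n) F :=
  P * substAt i c Q - substAt i c P * Q

/-- `f` (a univariate polynomial, placed in the variable `x i`) is an indecomposable factor
of `Q`: `Q = f(x i) · H` with `H` not depending on `x i`. -/
def IsIndecompFactor {F : Type*} [CommSemiring F] {n : ℕ} (i : Fin n) (f : Polynomial F)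
    (Q : MvPolynomial (Fin n) F) : Prop :=
  ∃ H : MvPolynomial (Fin n) F, Q = toMv i f * H ∧ i ∉ H.vars

/-- The set `S 1 ∩ ⋯ ∩ S k` where `S i = {g i 1 (x 1), …, g i n (x n)}`. -/
noncomputable def commonFactors {F : Type*} [CommSemiring F] {n k : ℕ}
    (g : Fin k → Fin n → Polynomial F) : Finset (MvPolynomial (Fin n) F) :=
  (Finset.univ.image fun x : Fin k × Fin n => toMv x.2 (g x.1 x.2)).filter
    fun p => ∀ i : Fin k, ∃ j : Fin n, toMv j (g i j) = p

/-- The pseudo greatest common divisor: the product of the polynomials in `S 1 ∩ ⋯ ∩ S k`. -/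
noncomputable def pseudoGcd {F : Type*} [CommSemiring F] {n k : ℕ}
    (g : Fin k → Fin n → Polynomial F) : MvPolynomial (Fin n) F :=
  ∏ p ∈ commonFactors g, p

/-- The recursively defined maps `S l` built from the interpolation polynomials `W i` and a
polynomial map `L : F^q → F^n`.  The variables of `S l` are the `y`-variables
`Sum.inl (j, t)` (the coordinate `t` of the block `ȳ (j+1)`, for `j < l`) and the
`z`-variables `Sum.inr j` (representing `z (j+1)`, for `j < l`):
`S i 0 = 0` and
`S i (l+1) = S i l · W i (z (l+1)) + L i (ȳ (l+1)) · (1 − W i (z (l+1)))`. -/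
noncomputable def Sgen {F : Type*} [Field F] {n q : ℕ}
    (W : Fin n → Polynomial F) (L : Fin n → MvPolynomial (Fin q) F) :
    ℕ → Fin n → MvPolynomial ((ℕ × Fin q) ⊕ ℕ) F
  | 0, _ => 0
  | l + 1, i =>
      Sgen W L l i * Polynomial.aeval (X (Sum.inr l)) (W i) +
        rename (fun t => Sum.inl (l, t)) (L i) *
          (1 - Polynomial.aeval (X (Sum.inr l)) (W i))

namespace BV


variable {F : Type*} [Field F]

lemma digits_inj {M : ℕ} : ∀ {q : ℕ} (u v : Fin q → ℕ), (∀ τ, u τ < M) → (∀ τ, v τ < M) →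
    (∑ τ, u τ * M ^ (τ : ℕ)) = ∑ τ, v τ * M ^ (τ : ℕ) → u = v := by
  intro q
  induction q with
  | zero => intro u v _ _ _; funext τ; exact absurd τ.2 (by omega)
  | succ q ih =>
    intro u v hu hv hsum
    have hM : 0 < M := lt_of_le_of_lt (Nat.zero_le _) (hu 0)
    rw [Fin.sum_univ_succ, Fin.sum_univ_succ] at hsum
    have h1 : ∀ (w : Fin (q+1) → ℕ),
        (∑ τ : Fin q, w τ.succ * M ^ ((τ.succ : Fin (q+1)) : ℕ))
          = M * ∑ τ : Fin q, w τ.succ * M ^ (τ : ℕ) := by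
      intro w
      rw [Finset.mul_sum]
      refine Finset.sum_congr rfl fun τ _ => ?_
      rw [Fin.val_succ, pow_succ]
      ring
    rw [h1 u, h1 v] at hsum
    simp only [Fin.val_zero, pow_zero, mul_one] at hsum
    have h0 : u 0 = v 0 := by
      have e1 : (u 0 + M * ∑ τ : Fin q, u τ.succ * M ^ (τ:ℕ)) % M = u 0 := by
        rw [Nat.add_mul_mod_self_left, Nat.mod_eq_of_lt (hu 0)]
      have e2 : (v 0 + M * ∑ τ : Fin q, v τ.succ * M ^ (τ:ℕ)) % M = v 0 := by
        rw [Nat.add_mul_mod_self_left, Nat.mod_eq_of_lt (hv 0)]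
      rw [← e1, ← e2, hsum]
    have htail : (fun τ : Fin q => u τ.succ) = fun τ : Fin q => v τ.succ := by
      apply ih _ _ (fun τ => hu τ.succ) (fun τ => hv τ.succ)
      have : M * (∑ τ : Fin q, u τ.succ * M ^ (τ:ℕ)) = M * ∑ τ : Fin q, v τ.succ * M ^ (τ:ℕ) := by
        omega
      exact Nat.eq_of_mul_eq_mul_left hM this
    funext τ
    refine Fin.cases h0 (fun i => ?_) τ
    exact congrFun htail i

/-- Any `MvPolynomial` over a field which is not a constant is transcendental over the field. -/
lemma transcendental_of_nonconst {q : ℕ} (g : MvPolynomial (Fin q) F)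
    (hg : ∀ r : F, g ≠ MvPolynomial.C r) : Transcendental F g := by
  classical
  set M : ℕ := 1 + g.support.sup (fun α => Finset.univ.sup fun τ => α τ) with hM
  have hbound : ∀ α ∈ g.support, ∀ τ, α τ < M := by
    intro α hα τ
    have h1 : α τ ≤ Finset.univ.sup fun τ => α τ := Finset.le_sup (Finset.mem_univ τ)
    have h2 : (Finset.univ.sup fun τ => α τ) ≤ g.support.sup (fun α => Finset.univ.sup fun τ => α τ) :=
      Finset.le_sup (f := fun α : Fin q →₀ ℕ => Finset.univ.sup fun τ => α τ) hα
    omega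
  set w : (Fin q →₀ ℕ) → ℕ := fun α => ∑ τ, α τ * M ^ (τ : ℕ) with hw
  set ψ : MvPolynomial (Fin q) F →ₐ[F] Polynomial F :=
    MvPolynomial.aeval (fun τ : Fin q => (Polynomial.X : Polynomial F) ^ (M ^ (τ : ℕ))) with hψ
  have hmono : ∀ (α : Fin q →₀ ℕ) (a : F), ψ (monomial α a) = Polynomial.C a * Polynomial.X ^ (w α) := by
    intro α a
    have hfac : ∀ τ : Fin q, ((Polynomial.X : Polynomial F) ^ M ^ (τ:ℕ)) ^ α τ
        = Polynomial.X ^ (α τ * M ^ (τ:ℕ)) := by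
      intro τ; rw [mul_comm, pow_mul]
    have heq : (Finsupp.prod α fun nn e => ((Polynomial.X : Polynomial F) ^ M ^ (nn:ℕ)) ^ e)
        = Polynomial.X ^ w α := by
      rw [Finsupp.prod_fintype _ _ (fun τ => pow_zero _)]
      rw [Finset.prod_congr rfl (fun τ _ => hfac τ), Finset.prod_pow_eq_pow_sum]
    rw [hψ, MvPolynomial.aeval_monomial, heq, Polynomial.algebraMap_eq]
  have hcoeff : ∀ α₀ ∈ g.support, (ψ g).coeff (w α₀) = g.coeff α₀ := by
    intro α₀ hα₀
    conv_lhs => rw [g.as_sum]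
    rw [map_sum]
    rw [Finset.sum_congr rfl (fun α hα => by rw [hmono α (g.coeff α)])]
    rw [Polynomial.finset_sum_coeff]
    rw [Finset.sum_eq_single α₀]
    · simp
    · intro α hα hne
      have : w α ≠ w α₀ := by
        intro he
        exact hne (Finsupp.ext (congrFun (digits_inj (α : Fin q → ℕ) (α₀ : Fin q → ℕ)
          (hbound α hα) (hbound α₀ hα₀) he)))
      simp [Polynomial.coeff_C_mul, Polynomial.coeff_X_pow, this, Ne.symm this]
    · intro h; exact absurd hα₀ h
  -- pick a nonconstant monomial
  have hex : ∃ α₀ ∈ g.support, α₀ ≠ 0 := by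
    by_contra hcon
    push_neg at hcon
    refine hg (g.coeff 0) ?_
    ext m
    by_cases hm : m = 0
    · subst hm; simp
    · have h1 : MvPolynomial.coeff m g = 0 := by
        by_contra hne2; exact hm (hcon m (MvPolynomial.mem_support_iff.2 hne2))
      have h2 : MvPolynomial.coeff m (MvPolynomial.C (g.coeff 0) : MvPolynomial (Fin q) F) = 0 := by
        simp [MvPolynomial.coeff_C, Ne.symm hm]
      rw [h1, h2]
  obtain ⟨α₀, hα₀, hα₀ne⟩ := hex
  have hwpos : 0 < w α₀ := by
    obtain ⟨τ, hτ⟩ : ∃ τ, α₀ τ ≠ 0 := by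
      by_contra hcon; push_neg at hcon; exact hα₀ne (Finsupp.ext hcon)
    have hMpos : 0 < M := by omega
    calc 0 < α₀ τ * M ^ (τ:ℕ) := Nat.mul_pos (Nat.pos_of_ne_zero hτ) (Nat.pow_pos hMpos)
    _ ≤ w α₀ := Finset.single_le_sum (f := fun τ => α₀ τ * M ^ (τ:ℕ))
          (fun _ _ => Nat.zero_le _) (Finset.mem_univ τ)
  have hgc : g.coeff α₀ ≠ 0 := MvPolynomial.mem_support_iff.1 hα₀
  have hne : (ψ g).coeff (w α₀) ≠ 0 := by rw [hcoeff α₀ hα₀]; exact hgc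
  have hdeg : (ψ g).natDegree ≠ 0 := by
    have := Polynomial.le_natDegree_of_ne_zero hne
    omega
  have hψg0 : ψ g ≠ 0 := fun h => hne (by simp [h])
  have htr : Transcendental F (ψ g) :=
    Polynomial.transcendental _ hdeg
      (mem_nonZeroDivisors_of_ne_zero (Polynomial.leadingCoeff_ne_zero.2 hψg0))
  rw [transcendental_iff] at htr ⊢
  intro p hp
  refine htr p ?_
  rw [Polynomial.aeval_algHom_apply, hp, map_zero]



variable {F : Type*} [Field F] {n q : ℕ}

/-- The `l`-th block copy of `L j`. -/
noncomputable def Lam (L : Fin n → MvPolynomial (Fin q) F) (l : ℕ) (j : Fin n) :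
    MvPolynomial ((ℕ × Fin q) ⊕ ℕ) F :=
  rename (fun t => Sum.inl (l, t)) (L j)

variable (W : Fin n → Polynomial F) (L : Fin n → MvPolynomial (Fin q) F)

lemma Sgen_zero (i : Fin n) : Sgen W L 0 i = 0 := rfl

lemma Sgen_succ (l : ℕ) (i : Fin n) :
    Sgen W L (l+1) i = Sgen W L l i * Polynomial.aeval (X (Sum.inr l)) (W i)
      + Lam L l i * (1 - Polynomial.aeval (X (Sum.inr l)) (W i)) := rfl

variable {A : Type*} [CommRing A] [Algebra F A]

lemma map_Sgen_succ (ψ : MvPolynomial ((ℕ × Fin q) ⊕ ℕ) F →ₐ[F] A) (l : ℕ) (i : Fin n) :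
    ψ (Sgen W L (l+1) i) = ψ (Sgen W L l i) * Polynomial.aeval (ψ (X (Sum.inr l))) (W i)
      + ψ (Lam L l i) * (1 - Polynomial.aeval (ψ (X (Sum.inr l))) (W i)) := by
  rw [Sgen_succ, map_add, map_mul, map_mul, map_sub, map_one,
    ← Polynomial.aeval_algHom_apply]

lemma hom_congr_Lam (ψ₁ ψ₂ : MvPolynomial ((ℕ × Fin q) ⊕ ℕ) F →ₐ[F] A) (l : ℕ)
    (hfix : ∀ τ, ψ₁ (X (Sum.inl (l, τ))) = ψ₂ (X (Sum.inl (l, τ)))) (j : Fin n) :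
    ψ₁ (Lam L l j) = ψ₂ (Lam L l j) := by
  have h : ψ₁.comp (rename (fun t : Fin q => Sum.inl (l, t)))
      = ψ₂.comp (rename (fun t : Fin q => (Sum.inl (l, t) : (ℕ × Fin q) ⊕ ℕ))) :=
    MvPolynomial.algHom_ext (fun τ => by simp [hfix τ])
  exact AlgHom.congr_fun h (L j)

lemma hom_congr_Sgen (ψ₁ ψ₂ : MvPolynomial ((ℕ × Fin q) ⊕ ℕ) F →ₐ[F] A) (K : ℕ)
    (hz : ∀ l < K, ψ₁ (X (Sum.inr l)) = ψ₂ (X (Sum.inr l)))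
    (hy : ∀ l < K, ∀ τ, ψ₁ (X (Sum.inl (l, τ))) = ψ₂ (X (Sum.inl (l, τ)))) :
    ∀ l, l ≤ K → ∀ i, ψ₁ (Sgen W L l i) = ψ₂ (Sgen W L l i) := by
  intro l
  induction l with
  | zero => intro _ i; rw [Sgen_zero, map_zero, map_zero]
  | succ l ih =>
    intro hl i
    rw [map_Sgen_succ, map_Sgen_succ, ih (by omega) i, hz l (by omega),
      hom_congr_Lam (L := L) ψ₁ ψ₂ l (hy l (by omega)) i]

/-- Substitution of the variable `z K` by the constant `r`. -/
noncomputable def phi (K : ℕ) (r : F) :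
    MvPolynomial ((ℕ × Fin q) ⊕ ℕ) F →ₐ[F] MvPolynomial ((ℕ × Fin q) ⊕ ℕ) F :=
  aeval (fun v => if v = Sum.inr K then MvPolynomial.C r else X v)

lemma phi_X_inr_self (K : ℕ) (r : F) :
    phi (q := q) K r (X (Sum.inr K)) = MvPolynomial.C r := by
  simp [phi]

lemma phi_X_ne (K : ℕ) (r : F) {v : (ℕ × Fin q) ⊕ ℕ} (hv : v ≠ Sum.inr K) :
    phi (q := q) K r (X v) = X v := by
  simp [phi, hv]

lemma phi_Sgen_le (K : ℕ) (r : F) {l : ℕ} (hl : l ≤ K) (i : Fin n) :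
    phi K r (Sgen W L l i) = Sgen W L l i := by
  have h := hom_congr_Sgen W L (phi K r) (AlgHom.id F _) K
    (fun l' hl' => by
      rw [phi_X_ne K r (by simp [Sum.inr.injEq]; omega), AlgHom.id_apply])
    (fun l' _ τ => by rw [phi_X_ne K r (by simp), AlgHom.id_apply])
  rw [h l hl i, AlgHom.id_apply]

lemma phi_Lam (K l : ℕ) (r : F) (j : Fin n) : phi K r (Lam L l j) = Lam L l j := by
  have h := hom_congr_Lam (L := L) (phi K r) (AlgHom.id F _) l
    (fun τ => by rw [phi_X_ne K r (by simp), AlgHom.id_apply]) j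
  rwa [AlgHom.id_apply] at h

lemma aeval_C_poly (r : F) (w : Polynomial F) :
    Polynomial.aeval (MvPolynomial.C r : MvPolynomial ((ℕ × Fin q) ⊕ ℕ) F) w
      = MvPolynomial.C (Polynomial.eval r w) := by
  rw [← MvPolynomial.algebraMap_eq, Polynomial.aeval_algebraMap_apply_eq_algebraMap_eval,
    MvPolynomial.algebraMap_eq]

variable (c : Fin (n + 1) → F)

lemma phi_Sgen_top
    (hW : ∀ (i : Fin n) (j : Fin (n + 1)),
      (W i).eval (c j) = if (i : ℕ) + 1 ≤ (j : ℕ) then 1 else 0)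
    (K : ℕ) (t : Fin (n+1)) (i : Fin n) :
    phi K (c t) (Sgen W L (K+1) i)
      = if (i : ℕ) + 1 ≤ (t : ℕ) then Sgen W L K i else Lam L K i := by
  rw [map_Sgen_succ, phi_X_inr_self, aeval_C_poly, hW i t, phi_Sgen_le W L K _ (le_refl K),
    phi_Lam]
  by_cases h : (i : ℕ) + 1 ≤ (t : ℕ)
  · rw [if_pos h, if_pos h]; simp
  · rw [if_neg h, if_neg h]; simp

lemma phi_comp_aeval
    (hW : ∀ (i : Fin n) (j : Fin (n + 1)),
      (W i).eval (c j) = if (i : ℕ) + 1 ≤ (j : ℕ) then 1 else 0)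
    (K : ℕ) (t : Fin (n+1)) (P : MvPolynomial (Fin n) F) :
    phi K (c t) (aeval (Sgen W L (K+1)) P)
      = aeval (fun j : Fin n =>
          if (j : ℕ) + 1 ≤ (t : ℕ) then Sgen W L K j else Lam L K j) P := by
  rw [MvPolynomial.comp_aeval_apply]
  have hfun : (fun j : Fin n => phi K (c t) (Sgen W L (K+1) j))
      = fun j : Fin n => if (j : ℕ) + 1 ≤ (t : ℕ) then Sgen W L K j else Lam L K j :=
    funext (phi_Sgen_top W L c hW K t)
  rw [hfun]

section Extract

/-- Moving the `K`-th block variables into the coefficients. -/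
noncomputable def theta (K : ℕ) :
    MvPolynomial ((ℕ × Fin q) ⊕ ℕ) F →ₐ[F] MvPolynomial ((ℕ × Fin q) ⊕ ℕ) (MvPolynomial (Fin q) F) :=
  aeval (fun v => match v with
    | Sum.inl x => if x.1 = K then MvPolynomial.C (MvPolynomial.X x.2) else MvPolynomial.X (Sum.inl x)
    | Sum.inr l => MvPolynomial.X (Sum.inr l))

/-- Coefficient embedding. -/
noncomputable def emb (K : ℕ) :
    MvPolynomial ((ℕ × Fin q) ⊕ ℕ) F →ₐ[F] MvPolynomial ((ℕ × Fin q) ⊕ ℕ) (MvPolynomial (Fin q) F) :=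
  MvPolynomial.mapAlgHom (Algebra.ofId F (MvPolynomial (Fin q) F))

lemma theta_X_inr (K l : ℕ) :
    theta (q := q) (F := F) K (X (Sum.inr l)) = X (Sum.inr l) := by
  simp [theta]

lemma theta_X_inl_ne (K : ℕ) {l : ℕ} (hl : l ≠ K) (τ : Fin q) :
    theta (q := q) (F := F) K (X (Sum.inl (l, τ))) = X (Sum.inl (l, τ)) := by
  simp [theta, hl]

lemma emb_X (K : ℕ) (v : (ℕ × Fin q) ⊕ ℕ) :
    emb (q := q) (F := F) K (X v) = X v := by
  simp [emb]

lemma emb_coeff (K : ℕ) (p : MvPolynomial ((ℕ × Fin q) ⊕ ℕ) F) (m : ((ℕ × Fin q) ⊕ ℕ) →₀ ℕ) :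
    MvPolynomial.coeff m (emb (q := q) K p)
      = MvPolynomial.C (MvPolynomial.coeff m p) := by
  simp [emb, MvPolynomial.mapAlgHom, MvPolynomial.coeff_map]
  rfl

lemma theta_aeval_Sgen (K : ℕ) (Q : MvPolynomial (Fin n) F) :
    theta K (aeval (Sgen W L K) Q) = emb K (aeval (Sgen W L K) Q) := by
  rw [MvPolynomial.comp_aeval_apply, MvPolynomial.comp_aeval_apply]
  have hfun : (fun j : Fin n => theta (q := q) (F := F) K (Sgen W L K j))
      = fun j : Fin n => emb (q := q) (F := F) K (Sgen W L K j) := by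
    funext j
    exact hom_congr_Sgen W L (theta K) (emb K) K
      (fun l _ => by rw [theta_X_inr, emb_X])
      (fun l hl τ => by rw [theta_X_inl_ne K (by omega), emb_X]) K (le_refl K) j
  rw [hfun]

lemma theta_X_inl_self (K : ℕ) (τ : Fin q) :
    theta (q := q) (F := F) K (X (Sum.inl (K, τ))) = MvPolynomial.C (MvPolynomial.X τ) := by
  simp [theta]

lemma theta_Lam (K : ℕ) (j : Fin n) :
    theta (q := q) (F := F) K (Lam L K j) = MvPolynomial.C (L j) := by
  have h : (theta (q := q) (F := F) K).comp
        (rename (fun t : Fin q => (Sum.inl (K, t) : (ℕ × Fin q) ⊕ ℕ)))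
      = IsScalarTower.toAlgHom F (MvPolynomial (Fin q) F)
          (MvPolynomial ((ℕ × Fin q) ⊕ ℕ) (MvPolynomial (Fin q) F)) :=
    MvPolynomial.algHom_ext (fun τ => by
      simp only [AlgHom.comp_apply, rename_X, theta_X_inl_self,
        IsScalarTower.coe_toAlgHom', MvPolynomial.algebraMap_eq])
  exact AlgHom.congr_fun h (L j)

lemma theta_aeval_Lam (K : ℕ) (j : Fin n) (u : Polynomial F) :
    theta (q := q) (F := F) K (Polynomial.aeval (Lam L K j) u)
      = MvPolynomial.C (Polynomial.aeval (L j) u) := by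
  rw [← Polynomial.aeval_algHom_apply, theta_Lam]
  have h := Polynomial.aeval_algHom_apply
    (IsScalarTower.toAlgHom F (MvPolynomial (Fin q) F)
      (MvPolynomial ((ℕ × Fin q) ⊕ ℕ) (MvPolynomial (Fin q) F))) (L j) u
  simpa only [IsScalarTower.coe_toAlgHom', MvPolynomial.algebraMap_eq] using h

lemma extract (K : ℕ) {ι' : Type*} [Fintype ι'] (t₀ : Fin n) (u : ι' → Polynomial F)
    (hind : LinearIndependent F fun j : ι' => Polynomial.aeval (L t₀) (u j))
    (p : ι' → MvPolynomial (Fin n) F)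
    (hz : ∑ j : ι', aeval (Sgen W L K) (p j) * Polynomial.aeval (Lam L K t₀) (u j) = 0) :
    ∀ j, aeval (Sgen W L K) (p j) = 0 := by
  have h1 := congrArg (theta (q := q) (F := F) K) hz
  rw [map_sum, map_zero] at h1
  have h1' : ∑ j : ι', MvPolynomial.C (Polynomial.aeval (L t₀) (u j))
      * emb K (aeval (Sgen W L K) (p j)) = 0 := by
    rw [← h1]
    refine Finset.sum_congr rfl fun j _ => ?_
    rw [map_mul, theta_aeval_Sgen W L K (p j), theta_aeval_Lam L K t₀ (u j), mul_comm]
  intro j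
  apply MvPolynomial.ext
  intro m
  rw [MvPolynomial.coeff_zero]
  have h2 := congrArg (MvPolynomial.coeff m) h1'
  rw [MvPolynomial.coeff_sum, MvPolynomial.coeff_zero] at h2
  have h3 : ∑ j : ι', MvPolynomial.coeff m (aeval (Sgen W L K) (p j))
      • (Polynomial.aeval (L t₀) (u j)) = 0 := by
    rw [← h2]
    refine Finset.sum_congr rfl fun j _ => ?_
    rw [MvPolynomial.coeff_C_mul, emb_coeff, Algebra.smul_def, MvPolynomial.algebraMap_eq,
      mul_comm]
  exact linearIndependent_iff'.mp hind Finset.univ _ h3 j (Finset.mem_univ j)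

end Extract




variable {n : ℕ} {M : Type*} [CommMonoid M]

lemma prod_if_split (t : ℕ) (x y : Fin n → M) :
    (∏ j : Fin n, if (j : ℕ) < t then x j else y j)
      = (∏ j : Fin n, if (j : ℕ) < t then x j else 1)
        * (∏ j : Fin n, if t ≤ (j : ℕ) then y j else 1) := by
  rw [← Finset.prod_mul_distrib]
  refine Finset.prod_congr rfl fun j _ => ?_
  by_cases h : (j : ℕ) < t
  · rw [if_pos h, if_pos h, if_neg (by omega), mul_one]
  · rw [if_neg h, if_neg h, if_pos (by omega), one_mul]

lemma prod_suffix_split {t : ℕ} (ht : t < n) (f : Fin n → M) :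
    (∏ j : Fin n, if t ≤ (j : ℕ) then f j else 1)
      = f ⟨t, ht⟩ * ∏ j : Fin n, if t + 1 ≤ (j : ℕ) then f j else 1 := by
  have key : ∀ j : Fin n, (if t ≤ (j : ℕ) then f j else 1)
      = (if j = ⟨t, ht⟩ then f j else 1) * (if t + 1 ≤ (j : ℕ) then f j else 1) := by
    intro j
    by_cases hj : j = ⟨t, ht⟩
    · subst hj
      rw [if_pos (le_refl t), if_pos rfl, if_neg (by simp), mul_one]
    · have hj' : (j : ℕ) ≠ t := by
        intro hc; exact hj (Fin.ext hc)
      rw [if_neg hj]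
      by_cases h : t ≤ (j : ℕ)
      · rw [if_pos h, if_pos (by omega), one_mul]
      · rw [if_neg h, if_neg (by omega), mul_one]
  rw [Finset.prod_congr rfl (fun j _ => key j), Finset.prod_mul_distrib,
    Finset.prod_ite_eq' Finset.univ (⟨t, ht⟩ : Fin n) f, if_pos (Finset.mem_univ _)]

lemma prod_three_split {t : ℕ} (ht : t < n) (f : Fin n → M) :
    (∏ j : Fin n, f j)
      = (∏ j : Fin n, if (j : ℕ) < t then f j else 1)
        * (f ⟨t, ht⟩ * ∏ j : Fin n, if t + 1 ≤ (j : ℕ) then f j else 1) := by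
  have h1 : (∏ j : Fin n, f j)
      = (∏ j : Fin n, if (j : ℕ) < t then f j else 1)
        * (∏ j : Fin n, if t ≤ (j : ℕ) then f j else 1) := by
    rw [← prod_if_split t f f]
    exact Finset.prod_congr rfl fun j _ => by by_cases h : (j : ℕ) < t <;> simp [h]
  rw [h1, prod_suffix_split ht f]

lemma prod_prefix_all {t : ℕ} (ht : n ≤ t) (f : Fin n → M) :
    (∏ j : Fin n, if (j : ℕ) < t then f j else 1) = ∏ j : Fin n, f j :=
  Finset.prod_congr rfl fun j _ => if_pos (by omega)

lemma prod_prefix_zero (f : Fin n → M) :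
    (∏ j : Fin n, if (j : ℕ) < 0 then f j else 1) = 1 :=
  Finset.prod_eq_one fun j _ => if_neg (by omega)

lemma prod_suffix_all (f : Fin n → M) :
    (∏ j : Fin n, if 0 ≤ (j : ℕ) then f j else 1) = ∏ j : Fin n, f j :=
  Finset.prod_congr rfl fun j _ => if_pos (by omega)

lemma prod_suffix_none {t : ℕ} (ht : n ≤ t) (f : Fin n → M) :
    (∏ j : Fin n, if t ≤ (j : ℕ) then f j else 1) = 1 :=
  Finset.prod_eq_one fun j _ => if_neg (by omega)


section Circuits

variable {F : Type*} [Field F] {n q : ℕ} {ι : Type*} [Fintype ι]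

lemma aeval_toMv {A : Type*} [CommRing A] [Algebra F A] (v : Fin n → A) (j : Fin n)
    (f : Polynomial F) : aeval v (toMv j f) = Polynomial.aeval (v j) f := by
  rw [toMv, ← Polynomial.aeval_algHom_apply, aeval_X]

lemma Lam_Paeval (L : Fin n → MvPolynomial (Fin q) F) (l : ℕ) (j : Fin n) (f : Polynomial F) :
    Polynomial.aeval (Lam L l j) f
      = rename (fun t => (Sum.inl (l, t) : (ℕ × Fin q) ⊕ ℕ)) (Polynomial.aeval (L j) f) := by
  rw [Lam, Polynomial.aeval_algHom_apply]

lemma Lam_Paeval_ne_zero {L : Fin n → MvPolynomial (Fin q) F}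
    (hLt : ∀ (j : Fin n) (f : Polynomial F), f ≠ 0 → Polynomial.aeval (L j) f ≠ 0)
    (l : ℕ) (j : Fin n) {f : Polynomial F} (hf : f ≠ 0) :
    Polynomial.aeval (Lam L l j) f ≠ 0 := by
  rw [Lam_Paeval]
  intro hcon
  refine hLt j f hf ?_
  have hinj : Function.Injective (fun t : Fin q => (Sum.inl (l, t) : (ℕ × Fin q) ⊕ ℕ)) := by
    intro a b hab; simpa using hab
  have := MvPolynomial.rename_injective (R := F) _ hinj
  apply this
  rw [hcon, map_zero]

lemma Lam_Paeval_inj {L : Fin n → MvPolynomial (Fin q) F}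
    (hLt : ∀ (j : Fin n) (f : Polynomial F), f ≠ 0 → Polynomial.aeval (L j) f ≠ 0)
    (l : ℕ) (j : Fin n) {f f' : Polynomial F}
    (hff : Polynomial.aeval (Lam L l j) f = Polynomial.aeval (Lam L l j) f') : f = f' := by
  by_contra hne
  refine Lam_Paeval_ne_zero hLt l j (f := f - f') (sub_ne_zero.2 hne) ?_
  rw [map_sub, hff, sub_self]

variable (W : Fin n → Polynomial F) (L : Fin n → MvPolynomial (Fin q) F)

/-- prefix product (in `x`-variables) -/
noncomputable def Axf (g : ι → Fin n → Polynomial F) (t : ℕ) (i : ι) :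
    MvPolynomial (Fin n) F :=
  ∏ j : Fin n, if (j : ℕ) < t then toMv j (g i j) else 1

/-- suffix product (in `x`-variables) -/
noncomputable def Bxf (g : ι → Fin n → Polynomial F) (t : ℕ) (i : ι) :
    MvPolynomial (Fin n) F :=
  ∏ j : Fin n, if t ≤ (j : ℕ) then toMv j (g i j) else 1

/-- suffix product composed with the `K`-th block of `L` -/
noncomputable def bbf (K : ℕ) (g : ι → Fin n → Polynomial F) (t : ℕ) (i : ι) :
    MvPolynomial ((ℕ × Fin q) ⊕ ℕ) F :=
  ∏ j : Fin n, if t ≤ (j : ℕ) then Polynomial.aeval (Lam L K j) (g i j) else 1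

variable {g : ι → Fin n → Polynomial F} {K : ℕ}

lemma bbf_ne_zero
    (hLt : ∀ (j : Fin n) (f : Polynomial F), f ≠ 0 → Polynomial.aeval (L j) f ≠ 0)
    (hg : ∀ i j, g i j ≠ 0) (t : ℕ) (i : ι) : bbf L K g t i ≠ 0 := by
  rw [bbf]
  rw [Finset.prod_ne_zero_iff]
  intro j _
  by_cases h : t ≤ (j : ℕ)
  · rw [if_pos h]; exact Lam_Paeval_ne_zero hLt K j (hg i j)
  · rw [if_neg h]; exact one_ne_zero

lemma bbf_rec {t : ℕ} (ht : t < n) (i : ι) :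
    bbf L K g t i = Polynomial.aeval (Lam L K ⟨t, ht⟩) (g i ⟨t, ht⟩) * bbf L K g (t+1) i :=
  prod_suffix_split ht _

lemma bbf_top (i : ι) : bbf L K g n i = 1 :=
  prod_suffix_none (le_refl n) _

lemma Bxf_rec {t : ℕ} (ht : t < n) (i : ι) :
    Bxf g t i = toMv ⟨t, ht⟩ (g i ⟨t, ht⟩) * Bxf g (t+1) i :=
  prod_suffix_split ht _

lemma Bxf_top (i : ι) : Bxf g n i = 1 :=
  prod_suffix_none (le_refl n) _

lemma Px_split {t : ℕ} (ht : t < n) (i : ι) :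
    (∏ j : Fin n, toMv j (g i j))
      = Axf g t i * (toMv ⟨t, ht⟩ (g i ⟨t, ht⟩) * Bxf g (t+1) i) :=
  prod_three_split ht _

lemma Axf_zero (i : ι) : Axf g 0 i = 1 :=
  prod_prefix_zero _

lemma Bxf_zero (i : ι) : Bxf g 0 i = ∏ j : Fin n, toMv j (g i j) :=
  prod_suffix_all _

lemma aeval_Axf (t : ℕ) (i : ι) :
    aeval (Sgen W L K) (Axf g t i)
      = ∏ j : Fin n, if (j : ℕ) < t then Polynomial.aeval (Sgen W L K j) (g i j) else 1 := by
  rw [Axf, map_prod]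
  refine Finset.prod_congr rfl fun j _ => ?_
  rw [apply_ite (aeval (Sgen W L K)), aeval_toMv, map_one]

variable (c : Fin (n + 1) → F)

lemma dagger
    (hW : ∀ (i : Fin n) (j : Fin (n + 1)),
      (W i).eval (c j) = if (i : ℕ) + 1 ≤ (j : ℕ) then 1 else 0)
    (lam : ι → F)
    (h0 : aeval (Sgen W L (K+1)) (∑ i : ι, MvPolynomial.C (lam i)
            * ∏ j : Fin n, toMv j (g i j)) = 0)
    {t : ℕ} (ht : t ≤ n) :
    ∑ i : ι, MvPolynomial.C (lam i) * (aeval (Sgen W L K) (Axf g t i) * bbf L K g t i) = 0 := by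
  have h1 := phi_comp_aeval W L c hW K ⟨t, by omega⟩
    (∑ i : ι, MvPolynomial.C (lam i) * ∏ j : Fin n, toMv j (g i j))
  rw [h0, map_zero] at h1
  rw [map_sum] at h1
  refine Eq.trans (Finset.sum_congr rfl fun i _ => ?_) h1.symm
  rw [map_mul, aeval_C, MvPolynomial.algebraMap_eq]
  congr 1
  rw [map_prod]
  have hterm : ∀ j : Fin n,
      aeval (fun j' : Fin n => if (j' : ℕ) + 1 ≤ ((⟨t, by omega⟩ : Fin (n+1)) : ℕ)
          then Sgen W L K j' else Lam L K j') (toMv j (g i j))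
      = if (j : ℕ) < t then Polynomial.aeval (Sgen W L K j) (g i j)
          else Polynomial.aeval (Lam L K j) (g i j) := by
    intro j
    rw [aeval_toMv]
    by_cases h : (j : ℕ) < t
    · rw [if_pos (by simp only [Fin.val_mk]; omega), if_pos h]
    · rw [if_neg (by simp only [Fin.val_mk]; omega), if_neg h]
  rw [Finset.prod_congr rfl (fun j _ => hterm j), prod_if_split t _ _, aeval_Axf, bbf]

end Circuits

section Main

variable {F : Type*} [Field F] {n q : ℕ}

lemma toMv_C (j : Fin n) (a : F) : toMv j (Polynomial.C a) = MvPolynomial.C a := by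
  rw [toMv, Polynomial.aeval_C, MvPolynomial.algebraMap_eq]

theorem main_case
    (W : Fin n → Polynomial F) (L : Fin n → MvPolynomial (Fin q) F)
    (c : Fin (n + 1) → F)
    (hW : ∀ (i : Fin n) (j : Fin (n + 1)),
      (W i).eval (c j) = if (i : ℕ) + 1 ≤ (j : ℕ) then 1 else 0)
    (hLt : ∀ (j : Fin n) (f : Polynomial F), f ≠ 0 → Polynomial.aeval (L j) f ≠ 0)
    (K : ℕ)
    (IH : ∀ (ι' : Type) [Fintype ι'], Fintype.card ι' ≤ K →
        ∀ (lam' : ι' → F) (g' : ι' → Fin n → Polynomial F),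
          (∑ i : ι', MvPolynomial.C (lam' i) * ∏ j : Fin n, toMv j (g' i j)) ≠ 0 →
          aeval (Sgen W L K)
            (∑ i : ι', MvPolynomial.C (lam' i) * ∏ j : Fin n, toMv j (g' i j)) ≠ 0)
    (ι : Type) [Fintype ι] [Nonempty ι] (hcard : Fintype.card ι ≤ K + 1)
    (lam : ι → F) (g : ι → Fin n → Polynomial F)
    (hlam : ∀ i, lam i ≠ 0) (hg : ∀ i j, g i j ≠ 0)
    (hP : (∑ i : ι, MvPolynomial.C (lam i) * ∏ j : Fin n, toMv j (g i j)) ≠ 0)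
    (h0 : aeval (Sgen W L (K+1))
        (∑ i : ι, MvPolynomial.C (lam i) * ∏ j : Fin n, toMv j (g i j)) = 0) :
    False := by
  classical
  obtain ⟨i₀⟩ := ‹Nonempty ι›
  set R1 : ℕ → Prop := fun t => ∃ e : ι → F, e i₀ = 1 ∧
      ∀ i, bbf L K g t i = MvPolynomial.C (e i) * bbf L K g t i₀ with hR1def
  have hR1n : R1 n := by
    refine ⟨fun _ => 1, rfl, fun i => ?_⟩
    rw [bbf_top, bbf_top, map_one, one_mul]
  set e : ℕ → ι → F := fun t => if h : R1 t then Classical.choose h else fun _ => 1 with he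
  have hespec : ∀ t, R1 t → (e t i₀ = 1 ∧
      ∀ i, bbf L K g t i = MvPolynomial.C (e t i) * bbf L K g t i₀) := by
    intro t h
    have : e t = Classical.choose h := by rw [he]; simp only [dif_pos h]
    rw [this]
    exact Classical.choose_spec h
  have hene : ∀ t, R1 t → ∀ i, e t i ≠ 0 := by
    intro t h i hzero
    have h2 := (hespec t h).2 i
    rw [hzero, map_zero, zero_mul] at h2
    exact bbf_ne_zero L hLt hg t i h2
  have hen1 : ∀ i, e n i = 1 := by
    intro i
    have h2 := (hespec n hR1n).2 i
    rw [bbf_top, bbf_top, mul_one] at h2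
    have h3 : (MvPolynomial.C (e n i) : MvPolynomial ((ℕ × Fin q) ⊕ ℕ) F)
        = MvPolynomial.C (1 : F) := by
      rw [← h2, MvPolynomial.C_1]
    exact MvPolynomial.C_injective _ _ h3
  have hchain : ∀ t (ht : t < n), R1 t → R1 (t+1) → ∀ i,
      Polynomial.C (e t i) * g i₀ ⟨t, ht⟩ = Polynomial.C (e (t+1) i) * g i ⟨t, ht⟩ := by
    intro t ht h1 h2 i
    have hb1 := (hespec t h1).2 i
    rw [bbf_rec L ht i, bbf_rec L ht i₀, (hespec (t+1) h2).2 i] at hb1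
    have hcancel : Polynomial.aeval (Lam L K ⟨t, ht⟩) (g i ⟨t, ht⟩) * MvPolynomial.C (e (t+1) i)
        = MvPolynomial.C (e t i) * Polynomial.aeval (Lam L K ⟨t, ht⟩) (g i₀ ⟨t, ht⟩) := by
      have hbne := bbf_ne_zero (K := K) L hLt hg (t+1) i₀
      apply mul_right_cancel₀ hbne
      linear_combination hb1
    have huni : Polynomial.aeval (Lam L K ⟨t, ht⟩) (Polynomial.C (e (t+1) i) * g i ⟨t, ht⟩)
        = Polynomial.aeval (Lam L K ⟨t, ht⟩) (Polynomial.C (e t i) * g i₀ ⟨t, ht⟩) := by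
      rw [map_mul, map_mul, Polynomial.aeval_C, Polynomial.aeval_C, MvPolynomial.algebraMap_eq]
      linear_combination hcancel
    exact (Lam_Paeval_inj hLt K ⟨t, ht⟩ huni).symm
  have htel : ∀ t₀, (∀ t, t₀ ≤ t → t ≤ n → R1 t) → ∀ d t, t + d = n → t₀ ≤ t →
      ∀ i, Bxf g t i = MvPolynomial.C (e t i) * Bxf g t i₀ := by
    intro t₀ hall d
    induction d with
    | zero =>
      intro t htn _ i
      have hteq : t = n := by omega
      subst hteq
      rw [Bxf_top, Bxf_top, hen1 i, MvPolynomial.C_1, one_mul]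
    | succ d ihd =>
      intro t htn ht₀ i
      have htlt : t < n := by omega
      have hR1t : R1 t := hall t ht₀ (by omega)
      have hR1t1 : R1 (t+1) := hall (t+1) (by omega) (by omega)
      have h4 := hchain t htlt hR1t hR1t1 i
      have h2 := ihd (t+1) (by omega) (by omega) i
      have h1 := Bxf_rec (g := g) htlt i
      have h3 := Bxf_rec (g := g) htlt i₀
      have h4x : MvPolynomial.C (e t i) * toMv (⟨t, htlt⟩ : Fin n) (g i₀ ⟨t, htlt⟩)
          = MvPolynomial.C (e (t+1) i) * toMv (⟨t, htlt⟩ : Fin n) (g i ⟨t, htlt⟩) := by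
        simp only [toMv]
        have h5 := congrArg
          (Polynomial.aeval (X (⟨t, htlt⟩ : Fin n) : MvPolynomial (Fin n) F)) h4
        rw [map_mul, map_mul, Polynomial.aeval_C, Polynomial.aeval_C,
          MvPolynomial.algebraMap_eq] at h5
        exact h5
      linear_combination h1 + toMv (⟨t, htlt⟩ : Fin n) (g i ⟨t, htlt⟩) * h2
        - MvPolynomial.C (e t i) * h3 - Bxf g (t+1) i₀ * h4x
  by_cases hall : ∀ t, t ≤ n → R1 t
  · -- all levels proportional: contradiction via the dagger identity at t = 0
    have hBx0 : ∀ i, Bxf g 0 i = MvPolynomial.C (e 0 i) * Bxf g 0 i₀ :=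
      fun i => htel 0 (fun t _ htn => hall t htn) n 0 (by omega) (by omega) i
    have hd := dagger W L c hW lam h0 (t := 0) (by omega)
    have hbb0 : ∀ i, bbf L K g 0 i = MvPolynomial.C (e 0 i) * bbf L K g 0 i₀ :=
      fun i => (hespec 0 (hall 0 (by omega))).2 i
    have hd2 : MvPolynomial.C (∑ i, lam i * e 0 i) * bbf L K g 0 i₀ = 0 := by
      rw [← hd, map_sum, Finset.sum_mul]
      refine Finset.sum_congr rfl fun i _ => ?_
      rw [Axf_zero, map_one, one_mul, hbb0 i, map_mul]
      ring
    have hsum0 : (∑ i, lam i * e 0 i) = 0 := by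
      rcases mul_eq_zero.mp hd2 with hx | hx
      · have h6 : (MvPolynomial.C (∑ i, lam i * e 0 i)
            : MvPolynomial ((ℕ × Fin q) ⊕ ℕ) F) = MvPolynomial.C (0 : F) := by
          rw [hx, MvPolynomial.C_0]
        exact MvPolynomial.C_injective _ _ h6
      · exact absurd hx (bbf_ne_zero L hLt hg 0 i₀)
    refine hP ?_
    have hPeq : (∑ i : ι, MvPolynomial.C (lam i) * ∏ j : Fin n, toMv j (g i j))
        = MvPolynomial.C (∑ i, lam i * e 0 i) * Bxf g 0 i₀ := by
      rw [map_sum, Finset.sum_mul]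
      refine Finset.sum_congr rfl fun i _ => ?_
      rw [← Bxf_zero, hBx0 i, map_mul]
      ring
    rw [hPeq, hsum0, MvPolynomial.C_0, zero_mul]
  · push_neg at hall
    obtain ⟨tw, htw, htwR⟩ := hall
    set ts := Nat.findGreatest (fun t => ¬ R1 t) n with hts
    have htsP : ¬ R1 ts := Nat.findGreatest_spec (P := fun t => ¬ R1 t) htw htwR
    have htsle : ts ≤ n := Nat.findGreatest_le (P := fun t => ¬ R1 t) n
    have htsgr : ∀ t, ts < t → t ≤ n → R1 t := by
      intro t h1 h2
      by_contra hcon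
      have h3 := Nat.le_findGreatest (P := fun t => ¬ R1 t) h2 hcon
      rw [← hts] at h3
      omega
    have htslt : ts < n := by
      rcases Nat.lt_or_ge ts n with hx | hx
      · exact hx
      · exfalso
        have hteq : ts = n := by omega
        exact htsP (hteq ▸ hR1n)
    set tf : Fin n := ⟨ts, htslt⟩ with htf
    have hR1s1 : R1 (ts+1) := htsgr (ts+1) (by omega) (by omega)
    have hBxT : ∀ i, Bxf g (ts+1) i = MvPolynomial.C (e (ts+1) i) * Bxf g (ts+1) i₀ :=
      fun i => htel (ts+1) (fun t h1 h2 => htsgr t (by omega) h2) (n - (ts+1)) (ts+1)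
        (by omega) (by omega) i
    set hv : ι → Polynomial F := fun i => Polynomial.C (e (ts+1) i) * g i tf with hhv
    have hhne : ∀ i, hv i ≠ 0 := by
      intro i
      refine mul_ne_zero ?_ (hg i tf)
      simpa using hene _ hR1s1 i
    have hhi₀ : hv i₀ = g i₀ tf := by
      rw [hhv]
      simp only [(hespec _ hR1s1).1, Polynomial.C_1, one_mul]
    have hbbT : ∀ i, bbf L K g ts i
        = Polynomial.aeval (Lam L K tf) (hv i) * bbf L K g (ts+1) i₀ := by
      intro i
      rw [bbf_rec L htslt i, (hespec _ hR1s1).2 i, hhv]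
      simp only [map_mul, Polynomial.aeval_C, MvPolynomial.algebraMap_eq]
      ring
    have hi1ex : ∃ i1, ∀ a : F, hv i1 ≠ Polynomial.C a * hv i₀ := by
      by_contra hcon
      push_neg at hcon
      refine htsP ?_
      have he'spec : ∀ i, hv i = Polynomial.C ((hcon i).choose) * hv i₀ :=
        fun i => (hcon i).choose_spec
      set e' : ι → F := fun i => (hcon i).choose with he'
      have he'i₀ : e' i₀ = 1 := by
        have h5 := he'spec i₀
        have h6 : (Polynomial.C (e' i₀) - 1) * hv i₀ = 0 := by linear_combination h5.symm
        rcases mul_eq_zero.mp h6 with hx | hx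
        · have h7 : Polynomial.C (e' i₀) = Polynomial.C (1 : F) := by
            rw [Polynomial.C_1]
            linear_combination hx
          exact Polynomial.C_injective h7
        · exact absurd hx (hhne i₀)
      refine ⟨e', he'i₀, fun i => ?_⟩
      rw [hbbT i, hbbT i₀, he'spec i, map_mul, Polynomial.aeval_C, MvPolynomial.algebraMap_eq]
      ring
    obtain ⟨i1, hi1⟩ := hi1ex
    obtain ⟨b, hbsub, hbspan, hbind⟩ := exists_linearIndependent F (Set.range hv)
    have hbfin : b.Finite := (Set.finite_range hv).subset hbsub
    haveI : Fintype ↥b := hbfin.fintype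
    have hmemspan : ∀ i, hv i ∈ Submodule.span F (Set.range ((↑) : ↥b → Polynomial F)) := by
      intro i
      rw [Subtype.range_coe, hbspan]
      exact Submodule.subset_span ⟨i, rfl⟩
    have hrepr : ∀ i, ∃ E : ↥b → F, ∑ u : ↥b, E u • (u : Polynomial F) = hv i := by
      intro i
      obtain ⟨cc, hcc⟩ := Finsupp.mem_span_range_iff_exists_finsupp.mp (hmemspan i)
      refine ⟨fun u => cc u, ?_⟩
      rw [← hcc, Finsupp.sum_fintype]
      intro u
      rw [zero_smul]
    set E : ι → ↥b → F := fun i => (hrepr i).choose with hE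
    have hEspec : ∀ i, ∑ u : ↥b, E i u • (u : Polynomial F) = hv i :=
      fun i => (hrepr i).choose_spec
    have hdelta : ∀ (i' : ι) (u' : ↥b), hv i' = (u' : Polynomial F) →
        ∀ u, u ≠ u' → E i' u = 0 := by
      intro i' u' hu' u hu
      have hzero : ∑ u : ↥b, (E i' u - if u = u' then 1 else 0) • (u : Polynomial F) = 0 := by
        rw [Finset.sum_congr rfl
          (fun u (_ : u ∈ Finset.univ) => by rw [sub_smul, ite_smul, one_smul, zero_smul]),
          Finset.sum_sub_distrib, hEspec i',
          Finset.sum_ite_eq' Finset.univ u' (fun u : ↥b => (u : Polynomial F)),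
          if_pos (Finset.mem_univ _), hu', sub_self]
      have h5 := linearIndependent_iff'.mp hbind Finset.univ _ hzero u (Finset.mem_univ u)
      rwa [if_neg hu, sub_zero] at h5
    have h2elt : ∃ u₁ u₂ : ↥b, u₁ ≠ u₂ := by
      by_contra hcon
      push_neg at hcon
      rcases isEmpty_or_nonempty ↥b with hbe | hbn
      · have h5 := hEspec i₀
        rw [Finset.univ_eq_empty, Finset.sum_empty] at h5
        exact hhne i₀ h5.symm
      · obtain ⟨u⟩ := hbn
        haveI : Subsingleton ↥b := ⟨fun a b' => hcon a b'⟩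
        have hi : ∀ i, hv i = Polynomial.C (E i u) * (u : Polynomial F) := by
          intro i
          rw [← hEspec i, Fintype.sum_subsingleton _ u, Polynomial.smul_eq_C_mul]
        have hEne : E i₀ u ≠ 0 := by
          intro hz
          refine hhne i₀ ?_
          rw [hi i₀, hz, Polynomial.C_0, zero_mul]
        refine hi1 (E i1 u / E i₀ u) ?_
        rw [hi i1, hi i₀, ← mul_assoc, ← Polynomial.C_mul, div_mul_cancel₀ _ hEne]
    have hd := dagger W L c hW lam h0 (t := ts) (by omega)
    have hSigma : ∑ i : ι, MvPolynomial.C (lam i) * aeval (Sgen W L K) (Axf g ts i)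
        * Polynomial.aeval (Lam L K tf) (hv i) = 0 := by
      have hd2 : (∑ i : ι, MvPolynomial.C (lam i) * aeval (Sgen W L K) (Axf g ts i)
          * Polynomial.aeval (Lam L K tf) (hv i)) * bbf L K g (ts+1) i₀ = 0 := by
        rw [Finset.sum_mul, ← hd]
        refine Finset.sum_congr rfl fun i _ => ?_
        rw [hbbT i]
        ring
      rcases mul_eq_zero.mp hd2 with hx | hx
      · exact hx
      · exact absurd hx (bbf_ne_zero L hLt hg (ts+1) i₀)
    have hPaevalh : ∀ i, Polynomial.aeval (Lam L K tf) (hv i)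
        = ∑ u : ↥b, E i u • Polynomial.aeval (Lam L K tf) ((u : Polynomial F)) := by
      intro i
      rw [← hEspec i, map_sum]
      exact Finset.sum_congr rfl fun u _ => by rw [map_smul]
    set pfun : ↥b → MvPolynomial (Fin n) F :=
      fun u => ∑ i : ι, MvPolynomial.C (lam i * E i u) * Axf g ts i with hpfun
    have haevalp : ∀ u : ↥b, aeval (Sgen W L K) (pfun u)
        = ∑ i : ι, MvPolynomial.C (lam i * E i u) * aeval (Sgen W L K) (Axf g ts i) := by
      intro u
      simp only [hpfun]
      rw [map_sum]
      refine Finset.sum_congr rfl fun i _ => ?_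
      rw [map_mul, aeval_C, MvPolynomial.algebraMap_eq]
    have hSigma2 : ∑ u : ↥b, aeval (Sgen W L K) (pfun u)
        * Polynomial.aeval (Lam L K tf) ((u : Polynomial F)) = 0 := by
      rw [← hSigma]
      have hlhs : ∀ i, MvPolynomial.C (lam i) * aeval (Sgen W L K) (Axf g ts i)
          * Polynomial.aeval (Lam L K tf) (hv i)
          = ∑ u : ↥b, MvPolynomial.C (lam i * E i u) * aeval (Sgen W L K) (Axf g ts i)
              * Polynomial.aeval (Lam L K tf) ((u : Polynomial F)) := by
        intro i
        rw [hPaevalh i, Finset.mul_sum]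
        refine Finset.sum_congr rfl fun u _ => ?_
        rw [MvPolynomial.smul_eq_C_mul, MvPolynomial.C_mul]
        ring
      rw [Finset.sum_congr rfl fun i (_ : i ∈ Finset.univ) => hlhs i, Finset.sum_comm]
      refine Finset.sum_congr rfl fun u _ => ?_
      rw [haevalp u, Finset.sum_mul]
    have hη : LinearIndependent F fun u : ↥b => Polynomial.aeval (L tf) ((u : Polynomial F)) := by
      have hinj : Function.Injective
          ((Polynomial.aeval (L tf) : Polynomial F →ₐ[F] MvPolynomial (Fin q) F)) := by
        intro x y hxy
        by_contra hne
        exact hLt tf (x - y) (sub_ne_zero.2 hne) (by rw [map_sub, hxy, sub_self])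
      exact hbind.map' (Polynomial.aeval (L tf)).toLinearMap (LinearMap.ker_eq_bot.mpr hinj)
    have hDu := extract W L K tf (fun u : ↥b => (u : Polynomial F)) hη pfun hSigma2
    have hDzero : ∀ u : ↥b, pfun u = 0 := by
      intro u
      obtain ⟨u₁, u₂, hu12⟩ := h2elt
      have hu'ex : ∃ u' : ↥b, u ≠ u' := by
        by_cases hx : u = u₁
        · exact ⟨u₂, by rw [hx]; exact hu12⟩
        · exact ⟨u₁, hx⟩
      obtain ⟨u', huu'⟩ := hu'ex
      obtain ⟨i', hi'⟩ : ∃ i', hv i' = (u' : Polynomial F) := hbsub u'.2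
      have hEi' : E i' u = 0 := hdelta i' u' hi' u huu'
      by_contra hpne
      have hsub : pfun u = ∑ i : {x : ι // x ≠ i'},
          MvPolynomial.C (lam i.1 * E i.1 u) * ∏ j : Fin n,
            toMv j (if (j : ℕ) < ts then g i.1 j else 1) := by
        simp only [hpfun]
        rw [← Finset.add_sum_erase Finset.univ _ (Finset.mem_univ i')]
        rw [hEi', mul_zero, MvPolynomial.C_0, zero_mul, zero_add]
        rw [Finset.sum_subtype (p := fun x : ι => x ≠ i') (Finset.univ.erase i')
          (fun x => by simp [Finset.mem_erase])
          (fun i => MvPolynomial.C (lam i * E i u) * Axf g ts i)]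
        refine Finset.sum_congr rfl fun i _ => ?_
        congr 1
        rw [Axf]
        refine Finset.prod_congr rfl fun j _ => ?_
        by_cases hj : (j : ℕ) < ts
        · rw [if_pos hj, if_pos hj]
        · rw [if_neg hj, if_neg hj, toMv, map_one]
      have hcard' : Fintype.card {x : ι // x ≠ i'} ≤ K := by
        have h5 : Fintype.card {x : ι // x ≠ i'} = Fintype.card ι - 1 := by
          rw [Fintype.card_subtype_compl, Fintype.card_subtype_eq]
        omega
      have hIH := IH {x : ι // x ≠ i'} hcard'
        (fun i => lam i.1 * E i.1 u) (fun i j => if (j : ℕ) < ts then g i.1 j else 1)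
        (by rw [← hsub]; exact hpne)
      rw [← hsub] at hIH
      exact hIH (hDu u)
    refine hP ?_
    have hstep : ∀ i, MvPolynomial.C (lam i) * ∏ j : Fin n, toMv j (g i j)
        = ∑ u : ↥b, MvPolynomial.C (lam i * E i u) * Axf g ts i
            * (toMv tf ((u : Polynomial F)) * Bxf g (ts+1) i₀) := by
      intro i
      rw [Px_split (g := g) htslt i, hBxT i]
      have htoMvh : toMv tf (hv i) = MvPolynomial.C (e (ts+1) i) * toMv tf (g i tf) := by
        rw [hhv]
        simp only [toMv]
        rw [map_mul, Polynomial.aeval_C, MvPolynomial.algebraMap_eq]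
      have hexp : toMv tf (hv i) = ∑ u : ↥b, E i u • toMv tf ((u : Polynomial F)) := by
        rw [← hEspec i, toMv, map_sum]
        exact Finset.sum_congr rfl fun u _ => by rw [map_smul]; rfl
      have hcollect : MvPolynomial.C (lam i)
          * (Axf g ts i * (toMv tf (g i tf) * (MvPolynomial.C (e (ts+1) i) * Bxf g (ts+1) i₀)))
          = MvPolynomial.C (lam i) * Axf g ts i * (toMv tf (hv i) * Bxf g (ts+1) i₀) := by
        rw [htoMvh]
        ring
      rw [hcollect, hexp, Finset.sum_mul, Finset.mul_sum]
      refine Finset.sum_congr rfl fun u _ => ?_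
      rw [MvPolynomial.smul_eq_C_mul, MvPolynomial.C_mul]
      ring
    have hPfin : (∑ i : ι, MvPolynomial.C (lam i) * ∏ j : Fin n, toMv j (g i j))
        = ∑ u : ↥b, pfun u * (toMv tf ((u : Polynomial F)) * Bxf g (ts+1) i₀) := by
      rw [Finset.sum_congr rfl fun i (_ : i ∈ Finset.univ) => hstep i, Finset.sum_comm]
      refine Finset.sum_congr rfl fun u _ => ?_
      simp only [hpfun]
      rw [Finset.sum_mul]
    rw [hPfin]
    rw [Finset.sum_congr rfl fun u (_ : u ∈ Finset.univ) => by rw [hDzero u, zero_mul]]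
    exact Finset.sum_const_zero

end Main

section Claim

variable {F : Type*} [Field F] {n q : ℕ}

theorem claim
    (W : Fin n → Polynomial F) (L : Fin n → MvPolynomial (Fin q) F)
    (c : Fin (n + 1) → F)
    (hW : ∀ (i : Fin n) (j : Fin (n + 1)),
      (W i).eval (c j) = if (i : ℕ) + 1 ≤ (j : ℕ) then 1 else 0)
    (hLt : ∀ (j : Fin n) (f : Polynomial F), f ≠ 0 → Polynomial.aeval (L j) f ≠ 0) :
    ∀ (k : ℕ) (ι : Type) [Fintype ι], Fintype.card ι ≤ k →
      ∀ (lam : ι → F) (g : ι → Fin n → Polynomial F),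
        (∑ i : ι, MvPolynomial.C (lam i) * ∏ j : Fin n, toMv j (g i j)) ≠ 0 →
        aeval (Sgen W L k)
          (∑ i : ι, MvPolynomial.C (lam i) * ∏ j : Fin n, toMv j (g i j)) ≠ 0 := by
  intro k
  induction k with
  | zero =>
    intro ι _ hcard lam g hP
    exfalso
    haveI : IsEmpty ι := Fintype.card_eq_zero_iff.mp (le_antisymm hcard (Nat.zero_le _))
    rw [Finset.univ_eq_empty, Finset.sum_empty] at hP
    exact hP rfl
  | succ K IH =>
    intro ι instι hcard lam g hP h0
    have hlift : aeval (Sgen W L K)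
        (∑ i : ι, MvPolynomial.C (lam i) * ∏ j : Fin n, toMv j (g i j)) = 0 := by
      have h1 := phi_comp_aeval W L c hW K (Fin.last n)
        (∑ i : ι, MvPolynomial.C (lam i) * ∏ j : Fin n, toMv j (g i j))
      rw [h0, map_zero] at h1
      have hfun : (fun j : Fin n => if (j : ℕ) + 1 ≤ ((Fin.last n : Fin (n+1)) : ℕ)
          then Sgen W L K j else Lam L K j) = Sgen W L K := by
        funext j
        rw [if_pos]
        rw [Fin.val_last]
        exact j.isLt
      rw [hfun] at h1
      exact h1.symm
    by_cases hbad : ∃ i₀, lam i₀ = 0 ∨ ∃ j, g i₀ j = 0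
    · obtain ⟨i₀, hbad0⟩ := hbad
      have hzero : MvPolynomial.C (lam i₀) * ∏ j : Fin n, toMv j (g i₀ j) = 0 := by
        rcases hbad0 with h | ⟨j, hj⟩
        · rw [h, MvPolynomial.C_0, zero_mul]
        · have hmz : toMv j (g i₀ j) = 0 := by rw [hj, toMv, map_zero]
          rw [Finset.prod_eq_zero (Finset.mem_univ j) hmz, mul_zero]
      have hPeq : (∑ i : ι, MvPolynomial.C (lam i) * ∏ j : Fin n, toMv j (g i j))
          = ∑ i : {x : ι // x ≠ i₀}, MvPolynomial.C (lam i.1)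
              * ∏ j : Fin n, toMv j (g i.1 j) := by
        rw [← Finset.add_sum_erase Finset.univ _ (Finset.mem_univ i₀), hzero, zero_add]
        exact Finset.sum_subtype (p := fun x : ι => x ≠ i₀) _
          (fun x => by simp [Finset.mem_erase]) _
      have hcard' : Fintype.card {x : ι // x ≠ i₀} ≤ K := by
        have h5 : Fintype.card {x : ι // x ≠ i₀} = Fintype.card ι - 1 := by
          rw [Fintype.card_subtype_compl, Fintype.card_subtype_eq]
        have hpos : 1 ≤ Fintype.card ι := Fintype.card_pos_iff.mpr ⟨i₀⟩
        omega
      exact (IH {x : ι // x ≠ i₀} hcard' (fun i => lam i.1) (fun i => g i.1)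
        (by rw [← hPeq]; exact hP)) (by rw [← hPeq]; exact hlift)
    · by_cases hcard2 : Fintype.card ι ≤ K
      · exact IH ι hcard2 lam g hP hlift
      · push_neg at hbad
        haveI : Nonempty ι := Fintype.card_pos_iff.mp (by omega)
        exact main_case W L c hW hLt K IH ι hcard lam g
          (fun i => (hbad i).1) (fun i j => (hbad i).2 j) hP h0

end Claim

end BV

/-- Lemma 4.1. Fix `n+1` distinct elements `c 0, …, c n` of `F`, the
interpolation polynomials `W i` of degree at most `n` with `W i (c j) = 1` for `j ≥ i`
and `W i (c j) = 0` otherwise (here `i : Fin n` represents the paper's index `i+1 ∈ [n]`),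
and a polynomial map `L : F^q → F^n` that is a generator for `m`-sparse low degree
polynomials. If `P ≠ 0` is computed by a low degree unmixed ΣΠΣΠ(k) circuit of size
`s ≥ 2` with `k ≥ 1`, then `P(S k m) ≢ 0` for every `m ≥ s ^ (5 k² + 2)`. -/
theorem aeval_Sgen_ne_zero
    {F : Type*} [Field F] {n q k s m : ℕ} (hs : 2 ≤ s) (hk : 1 ≤ k)
    (c : Fin (n + 1) → F) (hc : Function.Injective c)
    (W : Fin n → Polynomial F)
    (hWdeg : ∀ i, (W i).natDegree ≤ n)
    (hW : ∀ (i : Fin n) (j : Fin (n + 1)),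
      (W i).eval (c j) = if (i : ℕ) + 1 ≤ (j : ℕ) then 1 else 0)
    (L : Fin n → MvPolynomial (Fin q) F)
    (hL : ∀ Q : MvPolynomial (Fin n) F, Q ≠ 0 → sparsity Q ≤ m → Q.totalDegree ≤ n →
      MvPolynomial.aeval L Q ≠ 0)
    (hm : s ^ (5 * k ^ 2 + 2) ≤ m)
    (g : Fin k → Fin n → Polynomial F)
    (hsize : ∀ i j, (g i j).support.card ≤ s)
    (P : MvPolynomial (Fin n) F)
    (hP : P = ∑ i : Fin k, ∏ j : Fin n, toMv j (g i j))
    (hlow : P.totalDegree ≤ n) (hP0 : P ≠ 0) :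
    MvPolynomial.aeval (Sgen W L k) P ≠ 0 := by
  have hm2 : 2 ≤ m := by
    have h1 : s ≤ s ^ (5 * k ^ 2 + 2) := Nat.le_self_pow (by omega) s
    omega
  have hLnc : ∀ j : Fin n, ∀ r : F, L j ≠ MvPolynomial.C r := by
    intro j r heq
    have hn1 : 1 ≤ n := by have := j.isLt; omega
    have hQ : (X j - MvPolynomial.C r : MvPolynomial (Fin n) F) ≠ 0 := by
      intro h
      have h' : (X j : MvPolynomial (Fin n) F) = MvPolynomial.C r := sub_eq_zero.mp h
      have h2 := congrArg MvPolynomial.totalDegree h'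
      rw [MvPolynomial.totalDegree_X, MvPolynomial.totalDegree_C] at h2
      omega
    have hsupp : sparsity (X j - MvPolynomial.C r : MvPolynomial (Fin n) F) ≤ m := by
      have h1 : (X j - MvPolynomial.C r : MvPolynomial (Fin n) F).support
          ⊆ (X j : MvPolynomial (Fin n) F).support ∪ (-(MvPolynomial.C r)
            : MvPolynomial (Fin n) F).support := by
        rw [sub_eq_add_neg]
        exact MvPolynomial.support_add
      have h2 := Finset.card_le_card h1
      have h3 := Finset.card_union_le (X j : MvPolynomial (Fin n) F).support
        (-(MvPolynomial.C r) : MvPolynomial (Fin n) F).support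
      have h4 : (X j : MvPolynomial (Fin n) F).support.card = 1 := by
        rw [MvPolynomial.support_X]; rfl
      have h5 : (-(MvPolynomial.C r) : MvPolynomial (Fin n) F).support.card ≤ 1 := by
        rw [MvPolynomial.support_neg]
        rw [← MvPolynomial.monomial_zero', MvPolynomial.support_monomial]
        split_ifs
        · simp
        · simp
      rw [sparsity]
      omega
    have hdeg : (X j - MvPolynomial.C r : MvPolynomial (Fin n) F).totalDegree ≤ n := by
      have h1 : (X j - MvPolynomial.C r : MvPolynomial (Fin n) F).totalDegree
          ≤ max (X j : MvPolynomial (Fin n) F).totalDegree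
            (-(MvPolynomial.C r) : MvPolynomial (Fin n) F).totalDegree := by
        rw [sub_eq_add_neg]
        exact MvPolynomial.totalDegree_add _ _
      rw [MvPolynomial.totalDegree_neg, MvPolynomial.totalDegree_X,
        MvPolynomial.totalDegree_C] at h1
      omega
    refine hL _ hQ hsupp hdeg ?_
    rw [map_sub, aeval_X, aeval_C, MvPolynomial.algebraMap_eq, heq]
    exact sub_self _
  have hLt : ∀ (j : Fin n) (f : Polynomial F), f ≠ 0 → Polynomial.aeval (L j) f ≠ 0 := by
    intro j f hf hcon
    have htr := BV.transcendental_of_nonconst (L j) (hLnc j)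
    rw [transcendental_iff] at htr
    exact hf (htr f hcon)
  have hone : P = ∑ i : Fin k, MvPolynomial.C ((1 : F)) * ∏ j : Fin n, toMv j (g i j) := by
    rw [hP]
    exact Finset.sum_congr rfl fun i _ => by rw [MvPolynomial.C_1, one_mul]
  rw [hone]
  exact BV.claim W L c hW hLt k (Fin k) (by rw [Fintype.card_fin]) (fun _ => 1) g
    (by rw [← hone]; exact hP0)
end

section
/- Fix n+1 distinct elements c_0,…,c_n of a field F, any polynomial map L = (L^1,…,L^n): F^q → F^n, and the recursively defined maps S_l built from L and c_0,…,c_n. Then for every l ≥ 1 and every 0 ≤ d ≤ n, the restriction of S_l obtained by substituting z_l = c_d equals (S^1_{l−1},…,S^d_{l−1},L^{d+1},…,L^n), where the first d components are functions of (ȳ_1,…,ȳ_{l−1},z_1,…,z_{l−1}) and the last n−d components are functions of ȳ_l. Consequently, for every a ∈ Im(S_{l−1}) and b ∈ Im(L) and every 0 ≤ d ≤ n, the point (a_1,…,a_d,b_{d+1},…,b_n) lies in Im(S_l); in particular Im(S_{l−1}) ∪ Im(L) ⊆ Im(S_l). -/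
open MvPolynomial Finset

attribute [local instance 10] Classical.propDecidable

lemma aux_aeval_eq_eval {F σ : Type*} [CommSemiring F] (p : σ → F) (q : MvPolynomial σ F) :
    aeval p q = eval p q := by
  rw [aeval_def, eval, Algebra.algebraMap_self]; rfl

lemma aux_eval_polyaeval {F σ : Type*} [CommSemiring F] (p : σ → F) (f : Polynomial F) (v : σ) :
    eval p (Polynomial.aeval (X v) f) = Polynomial.eval (p v) f := by
  induction f using Polynomial.induction_on with
  | C a => simp
  | add p q hp hq => simp [hp, hq]
  | monomial m a h => simp [pow_succ, ← mul_assoc] at h ⊢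

lemma aux_rename_eq {F σ τ : Type*} [CommSemiring F] (f : σ → τ) (p : MvPolynomial σ F) :
    rename f p = aeval (fun i => X (f i)) p := by
  induction p using MvPolynomial.induction_on <;> simp_all

lemma aux_aeval_polyaeval {F σ τ : Type*} [CommSemiring F] (g : σ → MvPolynomial τ F)
    (f : Polynomial F) (v : σ) :
    aeval (R := F) g (Polynomial.aeval (X v) f) = Polynomial.aeval (g v) f := by
  induction f using Polynomial.induction_on with
  | C a =>
      simp only [Polynomial.aeval_C, MvPolynomial.algebraMap_eq, MvPolynomial.aeval_C]
  | add p q hp hq => simp only [map_add, hp, hq]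
  | monomial m a h =>
      rw [pow_succ, ← mul_assoc, map_mul, map_mul, h]; simp

lemma aux_polyaeval_C {F τ : Type*} [CommSemiring F] (x : F) (f : Polynomial F) :
    Polynomial.aeval (MvPolynomial.C (σ := τ) x) f = MvPolynomial.C (f.eval x) := by
  induction f using Polynomial.induction_on with
  | C a => simp
  | add p q hp hq => simp [hp, hq]
  | monomial m a h => simp [pow_succ, ← mul_assoc] at h ⊢

/-- Evaluations agreeing on the first `m` blocks of variables give the same value on `Sgen m`. -/
lemma aux_eval_agree {F : Type*} [Field F] {n q : ℕ}
    (W : Fin n → Polynomial F) (L : Fin n → MvPolynomial (Fin q) F) (m : ℕ) (i : Fin n)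
    (p p' : (ℕ × Fin q) ⊕ ℕ → F)
    (h1 : ∀ j < m, ∀ t, p (Sum.inl (j, t)) = p' (Sum.inl (j, t)))
    (h2 : ∀ j < m, p (Sum.inr j) = p' (Sum.inr j)) :
    eval p (Sgen W L m i) = eval p' (Sgen W L m i) := by
  induction m with
  | zero => simp [Sgen]
  | succ m ih =>
      have hm : m < m + 1 := Nat.lt_succ_self m
      simp only [Sgen, map_add, map_mul, map_sub, map_one, eval_rename,
        aux_eval_polyaeval]
      have hc : (p ∘ fun t => Sum.inl (m, t)) = (p' ∘ fun t => Sum.inl (m, t)) :=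
        funext fun t => h1 m hm t
      rw [ih (fun j hj t => h1 j (hj.trans hm) t) (fun j hj => h2 j (hj.trans hm)),
        h2 m hm, hc]

lemma aux_aeval_agree {F : Type*} [Field F] {n q : ℕ}
    (W : Fin n → Polynomial F) (L : Fin n → MvPolynomial (Fin q) F) (m : ℕ) (i : Fin n)
    (σ : (ℕ × Fin q) ⊕ ℕ → MvPolynomial ((ℕ × Fin q) ⊕ ℕ) F)
    (h1 : ∀ j < m, ∀ t, σ (Sum.inl (j, t)) = X (Sum.inl (j, t)))
    (h2 : ∀ j < m, σ (Sum.inr j) = X (Sum.inr j)) :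
    aeval σ (Sgen W L m i) = Sgen W L m i := by
  induction m with
  | zero => simp [Sgen]
  | succ m ih =>
      have hm : m < m + 1 := Nat.lt_succ_self m
      simp only [Sgen, map_add, map_mul, map_sub, map_one, aeval_rename,
        aux_aeval_polyaeval]
      rw [ih (fun j hj t => h1 j (hj.trans hm) t) (fun j hj => h2 j (hj.trans hm)),
        h2 m hm]
      have hc : (σ ∘ fun t : Fin q => Sum.inl (m, t))
          = fun t : Fin q => X (R := F) (Sum.inl (m, t)) := funext fun t => h1 m hm t
      rw [hc, ← aux_rename_eq]

/-- The key image fact, for arbitrary `d`. -/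
lemma aux_image {F : Type*} [Field F] {n q : ℕ} (c : Fin (n + 1) → F)
    (W : Fin n → Polynomial F)
    (hW : ∀ (i : Fin n) (j : Fin (n + 1)),
      (W i).eval (c j) = if (i : ℕ) + 1 ≤ (j : ℕ) then 1 else 0)
    (L : Fin n → MvPolynomial (Fin q) F) (m : ℕ) (d : Fin (n + 1))
    (a b : Fin n → F)
    (ha : ∃ p : (ℕ × Fin q) ⊕ ℕ → F, ∀ i, MvPolynomial.eval p (Sgen W L m i) = a i)
    (hb : ∃ y : Fin q → F, ∀ i, MvPolynomial.eval y (L i) = b i) :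
    ∃ p : (ℕ × Fin q) ⊕ ℕ → F, ∀ i,
      MvPolynomial.eval p (Sgen W L (m + 1) i) = if (i : ℕ) < (d : ℕ) then a i else b i := by
  obtain ⟨p, hp⟩ := ha
  obtain ⟨y, hy⟩ := hb
  refine ⟨Sum.elim (fun jt => if jt.1 = m then y jt.2 else p (Sum.inl jt))
      (fun j => if j = m then c d else p (Sum.inr j)), fun i => ?_⟩
  simp only [Sgen, map_add, map_mul, map_sub, map_one, eval_rename, aux_eval_polyaeval]
  have h1 : eval (Sum.elim (fun jt : ℕ × Fin q => if jt.1 = m then y jt.2 else p (Sum.inl jt))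
      (fun j => if j = m then c d else p (Sum.inr j))) (Sgen W L m i) = a i := by
    rw [← hp i]
    apply aux_eval_agree
    · intro j hj t; simp [Nat.ne_of_lt hj]
    · intro j hj; simp [Nat.ne_of_lt hj]
  have h2 : (Sum.elim (fun jt : ℕ × Fin q => if jt.1 = m then y jt.2 else p (Sum.inl jt))
      (fun j => if j = m then c d else p (Sum.inr j)) ∘ fun t => Sum.inl (m, t)) = y := by
    funext t; simp
  rw [h1, h2, hy i, Sum.elim_inr, if_pos rfl, hW i d]
  rcases lt_or_ge (i : ℕ) (d : ℕ) with h | h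
  · have h' : (i : ℕ) + 1 ≤ (d : ℕ) := h
    rw [if_pos h', if_pos h]; ring
  · have h' : ¬((i : ℕ) + 1 ≤ (d : ℕ)) := by omega
    rw [if_neg h', if_neg (not_lt.mpr h)]; ring

/-- Fact 4.5. For every `l ≥ 1` and `0 ≤ d ≤ n`, substituting
`z l = c d` into `S l` yields `(S¹_{l−1}, …, S^d_{l−1}, L^{d+1}, …, L^n)` (here
`i : Fin n` represents the paper's component `i+1`, so the condition “component ≤ d”
reads `(i : ℕ) < d`).  Consequently, for every `a ∈ Im (S (l−1))`, `b ∈ Im L` and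
`0 ≤ d ≤ n`, the point `(a 1, …, a d, b (d+1), …, b n)` lies in `Im (S l)`; in
particular `Im (S (l−1)) ∪ Im L ⊆ Im (S l)`. -/
theorem Sgen_subst_last_z
    {F : Type*} [Field F] {n q : ℕ}
    (c : Fin (n + 1) → F) (hc : Function.Injective c)
    (W : Fin n → Polynomial F)
    (hWdeg : ∀ i, (W i).natDegree ≤ n)
    (hW : ∀ (i : Fin n) (j : Fin (n + 1)),
      (W i).eval (c j) = if (i : ℕ) + 1 ≤ (j : ℕ) then 1 else 0)
    (L : Fin n → MvPolynomial (Fin q) F)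
    (l : ℕ) (hl : 1 ≤ l) (d : Fin (n + 1)) :
    (∀ i : Fin n,
      MvPolynomial.aeval
          (fun v : (ℕ × Fin q) ⊕ ℕ =>
            if v = Sum.inr (l - 1) then MvPolynomial.C (c d) else MvPolynomial.X v)
          (Sgen W L l i) =
        if (i : ℕ) < (d : ℕ) then Sgen W L (l - 1) i
        else rename (fun t => Sum.inl (l - 1, t)) (L i)) ∧
    (∀ a b : Fin n → F,
      (∃ p : (ℕ × Fin q) ⊕ ℕ → F, ∀ i, MvPolynomial.eval p (Sgen W L (l - 1) i) = a i) →
      (∃ y : Fin q → F, ∀ i, MvPolynomial.eval y (L i) = b i) →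
      ∃ p : (ℕ × Fin q) ⊕ ℕ → F, ∀ i,
        MvPolynomial.eval p (Sgen W L l i) = if (i : ℕ) < (d : ℕ) then a i else b i) ∧
    (∀ v : Fin n → F,
      ((∃ p : (ℕ × Fin q) ⊕ ℕ → F, ∀ i, MvPolynomial.eval p (Sgen W L (l - 1) i) = v i) ∨
        (∃ y : Fin q → F, ∀ i, MvPolynomial.eval y (L i) = v i)) →
      ∃ p : (ℕ × Fin q) ⊕ ℕ → F, ∀ i, MvPolynomial.eval p (Sgen W L l i) = v i) := by
  obtain ⟨m, rfl⟩ : ∃ m, l = m + 1 := ⟨l - 1, (Nat.succ_pred_eq_of_pos hl).symm⟩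
  have hml : (m + 1) - 1 = m := by omega
  rw [hml]
  refine ⟨fun i => ?_, fun a b ha hb => aux_image c W hW L m d a b ha hb, fun v hv => ?_⟩
  · show aeval (fun v : (ℕ × Fin q) ⊕ ℕ =>
        if v = Sum.inr m then MvPolynomial.C (c d) else X v) (Sgen W L (m + 1) i) = _
    simp only [Sgen, map_add, map_mul, map_sub, map_one, aeval_rename, aux_aeval_polyaeval]
    rw [aux_aeval_agree W L m i _
        (fun j hj t => by simp) (fun j hj => by simp [Nat.ne_of_lt hj])]
    have hc : ((fun v : (ℕ × Fin q) ⊕ ℕ =>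
          if v = Sum.inr m then MvPolynomial.C (c d) else X v) ∘ fun t : Fin q => Sum.inl (m, t))
        = fun t : Fin q => X (R := F) (Sum.inl (m, t)) := funext fun t => by simp
    rw [hc, ← aux_rename_eq, if_pos trivial, aux_polyaeval_C, hW i d]
    rcases lt_or_ge (i : ℕ) (d : ℕ) with h | h
    · have h' : (i : ℕ) + 1 ≤ (d : ℕ) := h
      rw [if_pos h', if_pos h]
      simp
    · have h' : ¬((i : ℕ) + 1 ≤ (d : ℕ)) := by omega
      rw [if_neg h', if_neg (not_lt.mpr h)]
      simp
  · rcases hv with ⟨p, hp⟩ | ⟨y, hy⟩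
    · obtain ⟨p', hp'⟩ := aux_image c W hW L m (Fin.last n) v
        (fun i => eval (fun _ => 0) (L i)) ⟨p, hp⟩ ⟨fun _ => 0, fun i => rfl⟩
      exact ⟨p', fun i => by
        rw [hp' i, if_pos (by simp)]⟩
    · obtain ⟨p', hp'⟩ := aux_image c W hW L m 0 (fun i => eval (fun _ => 0) (Sgen W L m i)) v
        ⟨fun _ => 0, fun i => rfl⟩ ⟨y, hy⟩
      exact ⟨p', fun i => by rw [hp' i, if_neg (by simp)]⟩
end

section
/- Let F be an infinite field. There exists a constant c (independent of n, k, s) such that for all n, k ≥ 1 and s ≥ 2 there is a set H ⊆ F^n with |H| ≤ n^(c·k) · s^(c·k³) that is a hitting set for the class of low degree unmixed ΣΠΣΠ(k) circuits of size s in n variables: for every nonzero polynomial P computed by such a circuit there exists a ∈ H with P(a) ≠ 0. -/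
open MvPolynomial Finset

attribute [local instance 10] Classical.propDecidable

set_option linter.unusedSectionVars false

section Comb
variable {D : Type*} [CommRing D] [IsDomain D] {ι : Type*} {σ : Type*}

noncomputable def Rsum (I : Finset ι) (lam : ι → D) (f : ι → σ → D) (S : Finset σ) : D :=
  ∑ i ∈ I, lam i * ∏ j ∈ S, f i j

lemma Rsum_kill (I : Finset ι) (lam : ι → D) (f : ι → σ → D) (S : Finset σ) (p : σ)
    (hp : p ∉ S) (v : D) :
    Rsum (I.filter fun i => f i p ≠ v) (fun i => lam i * (f i p - v)) f S
      = Rsum I lam f (insert p S) - v * Rsum I lam f S := by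
  classical
  unfold Rsum
  rw [Finset.sum_filter, Finset.mul_sum, ← Finset.sum_sub_distrib]
  refine Finset.sum_congr rfl fun i _ => ?_
  rw [Finset.prod_insert hp]
  by_cases h : f i p = v
  · rw [if_neg (by simpa using h), h]; ring
  · rw [if_pos h]; ring

lemma Rsum_factor (I : Finset ι) (lam : ι → D) (f : ι → σ → D) (S T : Finset σ)
    (hdisj : Disjoint S T) (i₀ : ι) (hconst : ∀ j ∈ T, ∀ i ∈ I, f i j = f i₀ j) :
    Rsum I lam f (S ∪ T) = (∏ j ∈ T, f i₀ j) * Rsum I lam f S := by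
  unfold Rsum
  rw [Finset.mul_sum]
  refine Finset.sum_congr rfl fun i hi => ?_
  rw [Finset.prod_union hdisj, Finset.prod_congr rfl (fun j hj => hconst j hj i hi)]
  ring

lemma Rsum_split (I : Finset ι) (lam : ι → D) (f : ι → σ → D) (p : σ)
    (SC S' : Finset σ) (hdisj : Disjoint SC S') (i₁ i₂ : ι) (hi₁ : i₁ ∈ I) (hi₂ : i₂ ∈ I)
    (hSC : ∀ j ∈ SC, ∀ i ∈ I, ∀ i' ∈ I, f i p = f i' p → f i j = f i' j)
    (hcover : ∀ i ∈ I, f i p = f i₁ p ∨ f i p = f i₂ p) :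
    Rsum I lam f (SC ∪ S')
      = (∏ j ∈ SC, f i₁ j) * Rsum (I.filter fun i => f i p = f i₁ p) lam f S'
        + (∏ j ∈ SC, f i₂ j) * Rsum (I.filter fun i => ¬ (f i p = f i₁ p)) lam f S' := by
  classical
  unfold Rsum
  rw [← Finset.sum_filter_add_sum_filter_not I (fun i => f i p = f i₁ p), Finset.mul_sum,
    Finset.mul_sum]
  congr 1
  · refine Finset.sum_congr rfl fun i hi => ?_
    obtain ⟨hiI, hip⟩ := Finset.mem_filter.mp hi
    rw [Finset.prod_union hdisj,
      Finset.prod_congr rfl (fun j hj => hSC j hj i hiI i₁ hi₁ hip)]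
    ring
  · refine Finset.sum_congr rfl fun i hi => ?_
    obtain ⟨hiI, hip⟩ := Finset.mem_filter.mp hi
    have hip2 : f i p = f i₂ p := (hcover i hiI).resolve_left hip
    rw [Finset.prod_union hdisj,
      Finset.prod_congr rfl (fun j hj => hSC j hj i hiI i₂ hi₂ hip2)]
    ring

lemma Rsum_filter_add (I : Finset ι) (lam : ι → D) (f : ι → σ → D) (S : Finset σ)
    (P : ι → Prop) :
    Rsum I lam f S
      = Rsum (I.filter P) lam f S + Rsum (I.filter fun i => ¬ P i) lam f S := by
  classical
  unfold Rsum
  rw [Finset.sum_filter_add_sum_filter_not]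

/-- The main combinatorial bound: a system with all proper restricted sums vanishing,
nonvanishing top sum, and no "full" coordinate, has few coordinates. -/
theorem comb_main (I : Finset ι) :
    ∀ (lam : ι → D) (f : ι → σ → D) (J : Finset σ),
    (∀ i ∈ I, lam i ≠ 0) →
    (∀ S ⊆ J, S ≠ J → Rsum I lam f S = 0) →
    Rsum I lam f J ≠ 0 →
    (∀ j ∈ J, ∃ i ∈ I, ∃ i' ∈ I, f i j ≠ f i' j) →
    J.card + 2 ≤ 2 * I.card := by
  classical
  induction I using Finset.strongInduction with
  | _ I IH =>
  intro lam f J hlam hproper htop hnf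
  -- I is nonempty
  have hIne : I.Nonempty := by
    rcases I.eq_empty_or_nonempty with h | h
    · exfalso; apply htop; unfold Rsum; rw [h]; simp
    · exact h
  by_cases hJ : J = ∅
  · subst hJ; simp only [Finset.card_empty]
    have : 1 ≤ I.card := Finset.card_pos.mpr hIne
    omega
  obtain ⟨p, hp⟩ := Finset.nonempty_iff_ne_empty.mpr hJ
  -- sum of weights is 0, so at least 2 branches
  have hsum0 : ∑ i ∈ I, lam i = 0 := by
    have hJne : J ≠ ∅ := Finset.nonempty_iff_ne_empty.mp ⟨p, hp⟩
    have h := hproper ∅ (Finset.empty_subset J) (fun hc => hJne hc.symm)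
    unfold Rsum at h
    simpa using h
  have hI2 : 2 ≤ I.card := by
    by_contra h
    push_neg at h
    have h1 : I.card = 1 := by
      have : 1 ≤ I.card := Finset.card_pos.mpr hIne
      omega
    obtain ⟨i, hi⟩ := Finset.card_eq_one.mp h1
    rw [hi] at hsum0
    simp at hsum0
    exact hlam i (by rw [hi]; exact Finset.mem_singleton_self i) hsum0
  -- nonfullness at p
  obtain ⟨i₀, hi₀, i₁', hi₁', hne01⟩ := hnf p hp
  set vals := I.image (fun i => f i p) with hvals
  have hr2 : 2 ≤ vals.card := by
    have h0 : f i₀ p ∈ vals := Finset.mem_image_of_mem _ hi₀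
    have h1 : f i₁' p ∈ vals := Finset.mem_image_of_mem _ hi₁'
    exact Finset.one_lt_card.mpr ⟨_, h0, _, h1, hne01⟩
  set Iv := fun v => I.filter (fun i => f i p ≠ v) with hIvdef
  set lamv := fun (v : D) => (fun i => lam i * (f i p - v)) with hlamvdef
  set Fullp := fun v => (J.erase p).filter
      (fun j => ∀ i ∈ Iv v, ∀ i' ∈ Iv v, f i j = f i' j) with hFulldef
  set Jv := fun v => (J.erase p).filter
      (fun j => ¬ (∀ i ∈ Iv v, ∀ i' ∈ Iv v, f i j = f i' j)) with hJvdef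
  have herase_ne : J.erase p ≠ J := by
    intro h
    have := Finset.notMem_erase p J
    rw [h] at this; exact this hp
  have herase_sub : J.erase p ⊆ J := Finset.erase_subset p J
  have hcarderase : (J.erase p).card = J.card - 1 := Finset.card_erase_of_mem hp
  have hJpos : 1 ≤ J.card := Finset.card_pos.mpr ⟨p, hp⟩
  have hRJm : Rsum I lam f (J.erase p) = 0 := hproper _ herase_sub herase_ne
  have hRkill : ∀ (v : D), ∀ S ⊆ J.erase p, Rsum (Iv v) (lamv v) f S
      = Rsum I lam f (insert p S) - v * Rsum I lam f S := by
    intro v S hS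
    have hpS : p ∉ S := fun hmem => Finset.notMem_erase p J (hS hmem)
    exact Rsum_kill I lam f S p hpS v
  have hRtopv : ∀ (v : D), Rsum (Iv v) (lamv v) f (J.erase p) = Rsum I lam f J := by
    intro v
    rw [hRkill v _ (subset_refl _), Finset.insert_erase hp, hRJm]
    ring
  -- key inequality for each occurring value v
  have hkey : ∀ v ∈ vals, J.card + 1 ≤ (Fullp v).card + 2 * (Iv v).card := by
    intro v hv
    have hIvne : (Iv v).Nonempty := by
      rcases (Iv v).eq_empty_or_nonempty with h | h
      · exfalso
        apply htop
        have h2 := hRtopv v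
        rw [h] at h2
        unfold Rsum at h2
        simpa [Rsum] using h2.symm
      · exact h
    obtain ⟨iv, hivmem⟩ := hIvne
    have hivI : iv ∈ I := (Finset.mem_filter.mp hivmem).1
    have hdisjFJ : Disjoint (Jv v) (Fullp v) := by
      simp only [hJvdef, hFulldef]
      exact (Finset.disjoint_filter_filter_not (J.erase p) (J.erase p) _).symm
    have hJvU : Jv v ∪ Fullp v = J.erase p := by
      simp only [hJvdef, hFulldef]
      rw [Finset.union_comm]
      exact Finset.filter_union_filter_not_eq _ _
    have hfact : Rsum (Iv v) (lamv v) f (Jv v ∪ Fullp v)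
        = (∏ j ∈ Fullp v, f iv j) * Rsum (Iv v) (lamv v) f (Jv v) := by
      apply Rsum_factor _ _ _ _ _ hdisjFJ iv
      intro j hj i hi
      exact (Finset.mem_filter.mp hj).2 i hi iv hivmem
    have htopv : Rsum (Iv v) (lamv v) f (Jv v) ≠ 0 := by
      intro h0
      apply htop
      rw [← hRtopv v, ← hJvU, hfact, h0, mul_zero]
    have hJvle : (Jv v).card ≤ (J.erase p).card :=
      Finset.card_le_card (Finset.filter_subset _ _)
    have hproperv : ∀ S ⊆ Jv v, S ≠ Jv v → Rsum (Iv v) (lamv v) f S = 0 := by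
      intro S hS hSne
      have hScard : S.card < (Jv v).card :=
        Finset.card_lt_card (Finset.ssubset_iff_subset_ne.mpr ⟨hS, hSne⟩)
      have hSsub : S ⊆ J.erase p := hS.trans (Finset.filter_subset _ _)
      rw [hRkill v S hSsub]
      have h1 : Rsum I lam f S = 0 := by
        apply hproper S (hSsub.trans herase_sub)
        intro hEq
        have hc : S.card = J.card := by rw [hEq]
        omega
      have h2 : Rsum I lam f (insert p S) = 0 := by
        apply hproper _ ?_ ?_
        · intro x hx
          rcases Finset.mem_insert.mp hx with rfl | hx'
          · exact hp
          · exact herase_sub (hSsub hx')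
        · intro hEq
          have hc1 : (insert p S).card ≤ S.card + 1 := Finset.card_insert_le _ _
          have hc2 : J.card = (insert p S).card := by rw [hEq]
          omega
      rw [h1, h2]; ring
    have hlamv' : ∀ i ∈ Iv v, lamv v i ≠ 0 := by
      intro i hi
      obtain ⟨hiI, hipv⟩ := Finset.mem_filter.mp hi
      exact mul_ne_zero (hlam i hiI) (sub_ne_zero.mpr hipv)
    have hnfv : ∀ j ∈ Jv v, ∃ i ∈ Iv v, ∃ i' ∈ Iv v, f i j ≠ f i' j := by
      intro j hj
      have h2 := (Finset.mem_filter.mp hj).2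
      push_neg at h2
      exact h2
    obtain ⟨b, hbI, hbv⟩ := Finset.mem_image.mp hv
    have hssub : Iv v ⊂ I := by
      refine (Finset.ssubset_iff_of_subset (Finset.filter_subset _ _)).mpr ?_
      exact ⟨b, hbI, fun hmem => (Finset.mem_filter.mp hmem).2 hbv⟩
    have hIH := IH (Iv v) hssub (lamv v) f (Jv v) hlamv' hproperv htopv hnfv
    have hcount : (Fullp v).card + (Jv v).card = J.card - 1 := by
      rw [← hcarderase]
      simp only [hFulldef, hJvdef]
      exact Finset.card_filter_add_card_filter_not _
    omega
  by_cases hr3 : 2 < vals.card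
  · -- at least three values at p
    have hdisjFull : ∀ v ∈ vals, ∀ v' ∈ vals, v ≠ v' → Disjoint (Fullp v) (Fullp v') := by
      intro v hv v' hv' hvv'
      rw [Finset.disjoint_left]
      intro j hjv hjv'
      have hcard1 : vals.card - 1 ≤ (vals.erase v).card := Finset.pred_card_le_card_erase
      have hcard2 : (vals.erase v).card - 1 ≤ ((vals.erase v).erase v').card :=
        Finset.pred_card_le_card_erase
      obtain ⟨v'', hv''⟩ := Finset.card_pos.mp (by omega : 0 < ((vals.erase v).erase v').card)
      have hv''v' : v'' ≠ v' := (Finset.mem_erase.mp hv'').1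
      have hv''mem1 := (Finset.mem_erase.mp hv'').2
      have hv''v : v'' ≠ v := (Finset.mem_erase.mp hv''mem1).1
      have hv''vals : v'' ∈ vals := (Finset.mem_erase.mp hv''mem1).2
      obtain ⟨i'', hi''I, hi''⟩ := Finset.mem_image.mp hv''vals
      have hi''v : i'' ∈ Iv v := Finset.mem_filter.mpr ⟨hi''I, by rw [hi'']; exact hv''v⟩
      have hi''v' : i'' ∈ Iv v' := Finset.mem_filter.mpr ⟨hi''I, by rw [hi'']; exact hv''v'⟩
      have hjJ : j ∈ J := herase_sub (Finset.mem_filter.mp hjv).1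
      obtain ⟨a, haI, a', ha'I, hane⟩ := hnf j hjJ
      apply hane
      have hall : ∀ i ∈ I, f i j = f i'' j := by
        intro i hiI
        by_cases hiv : f i p = v
        · have hmem : i ∈ Iv v' := Finset.mem_filter.mpr ⟨hiI, by rw [hiv]; exact hvv'⟩
          exact (Finset.mem_filter.mp hjv').2 i hmem i'' hi''v'
        · have hmem : i ∈ Iv v := Finset.mem_filter.mpr ⟨hiI, hiv⟩
          exact (Finset.mem_filter.mp hjv).2 i hmem i'' hi''v
      rw [hall a haI, hall a' ha'I]
    have hUcard : ∑ v ∈ vals, (Fullp v).card ≤ J.card - 1 := by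
      rw [← Finset.card_biUnion hdisjFull]
      have hUsub : vals.biUnion Fullp ⊆ J.erase p := by
        intro j hj
        obtain ⟨v, _, hjv⟩ := Finset.mem_biUnion.mp hj
        exact (Finset.mem_filter.mp hjv).1
      calc (vals.biUnion Fullp).card ≤ (J.erase p).card := Finset.card_le_card hUsub
        _ = J.card - 1 := hcarderase
    have hfib : ∑ v ∈ vals, (I.filter fun i => f i p = v).card = I.card :=
      (Finset.card_eq_sum_card_fiberwise (fun i hi => Finset.mem_image_of_mem _ hi)).symm
    have hIvcard : ∀ v ∈ vals, (I.filter fun i => f i p = v).card + (Iv v).card = I.card := by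
      intro v _
      simp only [hIvdef]
      exact Finset.card_filter_add_card_filter_not _
    have hIvsum : (∑ v ∈ vals, (Iv v).card) + I.card = vals.card * I.card := by
      have h1 : ∑ v ∈ vals, ((I.filter fun i => f i p = v).card + (Iv v).card)
          = vals.card * I.card := by
        rw [Finset.sum_congr rfl hIvcard, Finset.sum_const, smul_eq_mul]
      rw [Finset.sum_add_distrib, hfib] at h1
      omega
    have hsumkey : vals.card * (J.card + 1)
        ≤ (∑ v ∈ vals, (Fullp v).card) + 2 * ∑ v ∈ vals, (Iv v).card := by
      calc vals.card * (J.card + 1) = ∑ _v ∈ vals, (J.card + 1) := by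
            rw [Finset.sum_const, smul_eq_mul]
        _ ≤ ∑ v ∈ vals, ((Fullp v).card + 2 * (Iv v).card) := Finset.sum_le_sum hkey
        _ = _ := by rw [Finset.sum_add_distrib, Finset.mul_sum]
    -- arithmetic
    obtain ⟨r', hr'⟩ : ∃ r', vals.card = r' + 3 := ⟨vals.card - 3, by omega⟩
    obtain ⟨a', ha'⟩ : ∃ a', J.card = a' + 1 := ⟨J.card - 1, by omega⟩
    set m := ∑ v ∈ vals, (Iv v).card with hmdef
    set U := ∑ v ∈ vals, (Fullp v).card with hUdef
    by_contra hc
    push_neg at hc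
    have hc' : 2 * I.card ≤ a' + 2 := by omega
    have hm2 : m = (r' + 2) * I.card := by
      have hx : (r' + 3) * I.card = (r' + 2) * I.card + I.card := by ring
      rw [hr', hx] at hIvsum
      omega
    have hU' : U ≤ a' := by omega
    have hkey2 : (r' + 3) * (a' + 2) ≤ a' + 2 * ((r' + 2) * I.card) := by
      calc (r' + 3) * (a' + 2) = vals.card * (J.card + 1) := by rw [hr', ha']
        _ ≤ U + 2 * m := hsumkey
        _ ≤ a' + 2 * ((r' + 2) * I.card) := by rw [hm2]; omega
    have hmul : (r' + 2) * (2 * I.card) ≤ (r' + 2) * (a' + 2) :=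
      Nat.mul_le_mul_left _ hc'
    nlinarith [hkey2, hmul]
  · -- exactly two values at p
    have hr2' : vals.card = 2 := le_antisymm (not_lt.mp hr3) hr2
    obtain ⟨v₁, v₂, hv12, hvals2⟩ := Finset.card_eq_two.mp hr2'
    have hv₁ : v₁ ∈ vals := by rw [hvals2]; exact Finset.mem_insert_self _ _
    have hv₂ : v₂ ∈ vals := by rw [hvals2]; simp
    obtain ⟨i₁, hi₁I, hfi₁⟩ := Finset.mem_image.mp hv₁
    obtain ⟨i₂, hi₂I, hfi₂⟩ := Finset.mem_image.mp hv₂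
    have hf12 : f i₁ p ≠ f i₂ p := by rw [hfi₁, hfi₂]; exact hv12
    have hcover : ∀ i ∈ I, f i p = f i₁ p ∨ f i p = f i₂ p := by
      intro i hiI
      have : f i p ∈ vals := Finset.mem_image_of_mem _ hiI
      rw [hvals2] at this
      rcases Finset.mem_insert.mp this with h | h
      · left; rw [h, hfi₁]
      · right; rw [Finset.mem_singleton.mp h, hfi₂]
    set B₁ := I.filter (fun i => f i p = f i₁ p) with hB₁def
    set B₂ := I.filter (fun i => ¬ (f i p = f i₁ p)) with hB₂def
    set C := J.filter (fun j => ∀ i ∈ I, ∀ i' ∈ I, f i p = f i' p → f i j = f i' j) with hCdef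
    have hpC : p ∈ C := Finset.mem_filter.mpr ⟨hp, fun i _ i' _ h => h⟩
    have hCsub : C ⊆ J := Finset.filter_subset _ _
    have hsplit : ∀ (SC S' : Finset σ), Disjoint SC S' → SC ⊆ C →
        Rsum I lam f (SC ∪ S')
          = (∏ j ∈ SC, f i₁ j) * Rsum B₁ lam f S'
            + (∏ j ∈ SC, f i₂ j) * Rsum B₂ lam f S' := by
      intro SC S' hdisj hSCC
      apply Rsum_split I lam f p SC S' hdisj i₁ i₂ hi₁I hi₂I
      · intro j hj i hi i' hi' heq
        exact (Finset.mem_filter.mp (hSCC hj)).2 i hi i' hi' heq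
      · exact hcover
    by_cases hCJ : C = J
    · -- all of J is "clone" of p : then J.card ≤ 1
      have hJ1 : J.card ≤ 1 := by
        by_contra h2
        push_neg at h2
        have hpne : ({p} : Finset σ) ≠ J := by
          intro h
          have : J.card = 1 := by rw [← h]; simp
          omega
        have hR0 : Rsum I lam f ∅ = 0 :=
          hproper ∅ (Finset.empty_subset J) (fun h => hJ (h.symm))
        have hRp : Rsum I lam f {p} = 0 :=
          hproper {p} (Finset.singleton_subset_iff.mpr hp) hpne
        have hΛsum : Rsum B₁ lam f ∅ + Rsum B₂ lam f ∅ = 0 := by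
          rw [← Rsum_filter_add I lam f ∅ (fun i => f i p = f i₁ p)]
          exact hR0
        have hΛp : f i₁ p * Rsum B₁ lam f ∅ + f i₂ p * Rsum B₂ lam f ∅ = 0 := by
          have h := hsplit {p} ∅ (Finset.disjoint_empty_right _)
            (Finset.singleton_subset_iff.mpr hpC)
          rw [Finset.union_empty, Finset.prod_singleton, Finset.prod_singleton] at h
          rw [← h]
          exact hRp
        have h4 : Rsum B₂ lam f ∅ = - Rsum B₁ lam f ∅ :=
          eq_neg_of_add_eq_zero_right hΛsum
        have hΛ1 : Rsum B₁ lam f ∅ = 0 := by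
          have h3 : (f i₁ p - f i₂ p) * Rsum B₁ lam f ∅ = 0 := by
            rw [h4] at hΛp
            linear_combination hΛp
          rcases mul_eq_zero.mp h3 with h | h
          · exact absurd (sub_eq_zero.mp h) hf12
          · exact h
        have hΛ2 : Rsum B₂ lam f ∅ = 0 := by rw [h4, hΛ1, neg_zero]
        apply htop
        have h := hsplit J ∅ (Finset.disjoint_empty_right _) (by rw [hCJ])
        rw [Finset.union_empty] at h
        rw [h, hΛ1, hΛ2, mul_zero, mul_zero, add_zero]
      omega
    · -- C ≠ J : then C = {p}
      have hC1 : C.card ≤ 1 := by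
        by_contra h2
        push_neg at h2
        set S' := J \ C with hS'def
        obtain ⟨q, hqC, hqp⟩ := Finset.exists_mem_ne h2 p
        have hqJ : q ∈ J := hCsub hqC
        have hpS' : p ∉ S' := by
          intro h
          exact (Finset.mem_sdiff.mp h).2 hpC
        have hS'sub : S' ⊆ J := Finset.sdiff_subset
        have hS'ne : S' ≠ J := by
          intro h
          rw [← h] at hp
          exact (Finset.mem_sdiff.mp hp).2 hpC
        have hMsum : Rsum B₁ lam f S' + Rsum B₂ lam f S' = 0 := by
          rw [← Rsum_filter_add I lam f S' (fun i => f i p = f i₁ p)]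
          exact hproper S' hS'sub hS'ne
        have hqnotin : q ∉ {p} ∪ S' := by
          intro h
          rcases Finset.mem_union.mp h with h | h
          · exact hqp (Finset.mem_singleton.mp h)
          · exact (Finset.mem_sdiff.mp h).2 hqC
        have hMp : f i₁ p * Rsum B₁ lam f S' + f i₂ p * Rsum B₂ lam f S' = 0 := by
          have h := hsplit {p} S' (by simp [hpS'])
            (Finset.singleton_subset_iff.mpr hpC)
          rw [Finset.prod_singleton, Finset.prod_singleton] at h
          rw [← h]
          apply hproper
          · intro x hx
            rcases Finset.mem_union.mp hx with h' | h'
            · rw [Finset.mem_singleton.mp h']; exact hp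
            · exact hS'sub h'
          · intro hEq
            rw [hEq] at hqnotin
            exact hqnotin hqJ
        have h4 : Rsum B₂ lam f S' = - Rsum B₁ lam f S' :=
          eq_neg_of_add_eq_zero_right hMsum
        have hM1 : Rsum B₁ lam f S' = 0 := by
          have h3 : (f i₁ p - f i₂ p) * Rsum B₁ lam f S' = 0 := by
            rw [h4] at hMp
            linear_combination hMp
          rcases mul_eq_zero.mp h3 with h | h
          · exact absurd (sub_eq_zero.mp h) hf12
          · exact h
        have hM2 : Rsum B₂ lam f S' = 0 := by rw [h4, hM1, neg_zero]
        apply htop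
        have hJCS : C ∪ S' = J := Finset.union_sdiff_of_subset hCsub
        have h := hsplit C S' Finset.disjoint_sdiff (subset_refl C)
        rw [hJCS] at h
        rw [h, hM1, hM2, mul_zero, mul_zero, add_zero]
      have hConly : ∀ j ∈ C, j = p := fun j hj => Finset.card_le_one.mp hC1 j hj p hpC
      have hdisj12 : Disjoint (Fullp v₁) (Fullp v₂) := by
        rw [Finset.disjoint_left]
        intro j hj1 hj2
        have hjep : j ∈ J.erase p := (Finset.mem_filter.mp hj1).1
        have hjC : j ∈ C := by
          refine Finset.mem_filter.mpr ⟨herase_sub hjep, ?_⟩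
          intro i hiI i' hi'I heq
          rcases hcover i hiI with h | h
          · have hi'2 : f i' p = f i₁ p := by rw [← heq]; exact h
            have hm1 : i ∈ Iv v₂ := Finset.mem_filter.mpr
              ⟨hiI, by rw [h, hfi₁]; exact hv12⟩
            have hm2 : i' ∈ Iv v₂ := Finset.mem_filter.mpr
              ⟨hi'I, by rw [hi'2, hfi₁]; exact hv12⟩
            exact (Finset.mem_filter.mp hj2).2 i hm1 i' hm2
          · have hi'2 : f i' p = f i₂ p := by rw [← heq]; exact h
            have hm1 : i ∈ Iv v₁ := Finset.mem_filter.mpr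
              ⟨hiI, by rw [h, hfi₂]; exact (Ne.symm hv12)⟩
            have hm2 : i' ∈ Iv v₁ := Finset.mem_filter.mpr
              ⟨hi'I, by rw [hi'2, hfi₂]; exact (Ne.symm hv12)⟩
            exact (Finset.mem_filter.mp hj1).2 i hm1 i' hm2
        exact (Finset.mem_erase.mp hjep).1 (hConly j hjC)
      have hIv12 : (Iv v₂).card + (Iv v₁).card = I.card := by
        have he1 : Iv v₂ = B₁ := by
          simp only [hIvdef, hB₁def]
          apply Finset.filter_congr
          intro i hiI
          simp only [ne_eq]
          constructor
          · intro h
            rcases hcover i hiI with h' | h'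
            · exact h'
            · exact absurd (by rw [h', hfi₂]) h
          · intro h
            rw [h, hfi₁]
            exact hv12
        have he2 : Iv v₁ = B₂ := by
          simp only [hIvdef, hB₂def]
          apply Finset.filter_congr
          intro i _
          rw [hfi₁]
        rw [he1, he2, hB₁def, hB₂def]
        exact Finset.card_filter_add_card_filter_not _
      have hk1 := hkey v₁ hv₁
      have hk2 := hkey v₂ hv₂
      have hFullsub : Fullp v₁ ∪ Fullp v₂ ⊆ J.erase p := by
        intro j hj
        rcases Finset.mem_union.mp hj with h | h
        · exact (Finset.mem_filter.mp h).1
        · exact (Finset.mem_filter.mp h).1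
      have hFullcard : (Fullp v₁).card + (Fullp v₂).card ≤ J.card - 1 := by
        rw [← Finset.card_union_of_disjoint hdisj12]
        calc (Fullp v₁ ∪ Fullp v₂).card ≤ (J.erase p).card := Finset.card_le_card hFullsub
          _ = J.card - 1 := hcarderase
      omega

/-- Tube vanishing: if all small restricted sums vanish, then all restricted sums vanish. -/
theorem tube_vanish (I : Finset ι) (lam : ι → D) (f : ι → σ → D)
    (hlam : ∀ i ∈ I, lam i ≠ 0)
    (h : ∀ S : Finset σ, S.card + 2 ≤ 2 * I.card → Rsum I lam f S = 0) :
    ∀ S : Finset σ, Rsum I lam f S = 0 := by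
  classical
  have main : ∀ (m : ℕ) (S : Finset σ), S.card ≤ m → Rsum I lam f S = 0 := by
    intro m
    induction m with
    | zero =>
      intro S hS
      have hS0 : S = ∅ := Finset.card_eq_zero.mp (Nat.le_zero.mp hS)
      subst hS0
      rcases I.eq_empty_or_nonempty with hI | hI
      · unfold Rsum; rw [hI]; simp
      · have : 1 ≤ I.card := Finset.card_pos.mpr hI
        exact h ∅ (by rw [Finset.card_empty]; omega)
    | succ m IHm =>
      intro S hS
      by_cases hsmall : S.card + 2 ≤ 2 * I.card
      · exact h S hsmall
      by_contra hne
      rcases I.eq_empty_or_nonempty with hI | hI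
      · apply hne; unfold Rsum; rw [hI]; simp
      by_cases hfull : ∃ j ∈ S, ∀ i ∈ I, ∀ i' ∈ I, f i j = f i' j
      · obtain ⟨j, hjS, hconst⟩ := hfull
        obtain ⟨i₀, hi₀⟩ := hI
        have hfac : Rsum I lam f (S.erase j ∪ {j})
            = (∏ x ∈ ({j} : Finset σ), f i₀ x) * Rsum I lam f (S.erase j) := by
          apply Rsum_factor _ _ _ _ _ (by simp) i₀
          intro x hx i hi
          rw [Finset.mem_singleton.mp hx]
          exact hconst i hi i₀ hi₀
        have hU : S.erase j ∪ {j} = S := by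
          rw [Finset.union_comm, ← Finset.insert_eq, Finset.insert_erase hjS]
        have hcard : (S.erase j).card ≤ m := by
          rw [Finset.card_erase_of_mem hjS]
          omega
        apply hne
        rw [← hU, hfac, IHm _ hcard, mul_zero]
      · push_neg at hfull
        have hproper : ∀ T ⊆ S, T ≠ S → Rsum I lam f T = 0 := by
          intro T hT hTne
          apply IHm
          have := Finset.card_lt_card (Finset.ssubset_iff_subset_ne.mpr ⟨hT, hTne⟩)
          omega
        have := comb_main I lam f S hlam hproper hne hfull
        omega
  intro S
  exact main S.card S le_rfl

end Comb

section Grid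
variable {K : Type*} [Field K]

lemma grid_fin : ∀ (m : ℕ) (q : MvPolynomial (Fin m) K) (T : Finset K), q ≠ 0 →
    (∀ j, MvPolynomial.degreeOf j q < T.card) →
    ∃ w : Fin m → K, (∀ j, w j ∈ T) ∧ MvPolynomial.eval w q ≠ 0 := by
  intro m
  induction m with
  | zero =>
    intro q T hq _
    refine ⟨fun j => j.elim0, fun j => j.elim0, ?_⟩
    have h0 : q.support.Nonempty := MvPolynomial.support_nonempty.mpr hq
    obtain ⟨d, hd⟩ := h0
    have huniq : ∀ d' ∈ q.support, d' = 0 := fun d' _ => Finsupp.ext (fun a => a.elim0)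
    have hd0 : (0 : Fin 0 →₀ ℕ) ∈ q.support := huniq d hd ▸ hd
    have hsub : q.support = {0} :=
      Finset.eq_singleton_iff_unique_mem.mpr ⟨hd0, huniq⟩
    rw [MvPolynomial.eval_eq, hsub, Finset.sum_singleton]
    have hco : MvPolynomial.coeff 0 q ≠ 0 := MvPolynomial.mem_support_iff.mp hd0
    simpa using hco
  | succ m IHm =>
    intro q T hq hdeg
    set Q := MvPolynomial.finSuccEquiv K m q with hQdef
    have hQ : Q ≠ 0 := by
      intro h0
      apply hq
      exact (MvPolynomial.finSuccEquiv K m).injective (by rw [← hQdef, h0, map_zero])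
    set d := Q.natDegree with hddef
    have hlead : Q.coeff d ≠ 0 := by
      rw [hddef, ← Polynomial.leadingCoeff]
      exact Polynomial.leadingCoeff_ne_zero.mpr hQ
    have hdegc : ∀ j : Fin m, MvPolynomial.degreeOf j (Q.coeff d) < T.card := by
      intro j
      calc MvPolynomial.degreeOf j (Q.coeff d) ≤ MvPolynomial.degreeOf j.succ q :=
            MvPolynomial.degreeOf_coeff_finSuccEquiv q j d
        _ < T.card := hdeg _
    obtain ⟨w', hw'T, hw'⟩ := IHm (Q.coeff d) T hlead hdegc
    set u := Q.map (MvPolynomial.eval w') with hudef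
    have hucoeff : u.coeff d ≠ 0 := by
      rw [hudef, Polynomial.coeff_map]
      exact hw'
    have hune : u ≠ 0 := fun h0 => hucoeff (by rw [h0]; simp)
    have hudeg : u.natDegree < T.card := by
      calc u.natDegree ≤ Q.natDegree := Polynomial.natDegree_map_le
        _ = MvPolynomial.degreeOf 0 q := MvPolynomial.natDegree_finSuccEquiv q
        _ < T.card := hdeg 0
    have hex : ∃ c ∈ T, Polynomial.eval c u ≠ 0 := by
      by_contra hcon
      push_neg at hcon
      have hsubT : T ⊆ u.roots.toFinset := by
        intro c hc
        rw [Multiset.mem_toFinset, Polynomial.mem_roots hune]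
        exact hcon c hc
      have h1 : T.card ≤ u.roots.toFinset.card := Finset.card_le_card hsubT
      have h2 : u.roots.toFinset.card ≤ Multiset.card u.roots := u.roots.toFinset_card_le
      have h3 := Polynomial.card_roots' u
      omega
    obtain ⟨c, hcT, hc⟩ := hex
    refine ⟨Fin.cons c w', ?_, ?_⟩
    · intro j
      refine Fin.cases ?_ ?_ j
      · simpa using hcT
      · intro i; simpa using hw'T i
    · rw [MvPolynomial.eval_eq_eval_mv_eval']
      exact hc

lemma grid_fintype {σ : Type*} [Fintype σ] (q : MvPolynomial σ K) (T : Finset K)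
    (hq : q ≠ 0) (hdeg : ∀ j, MvPolynomial.degreeOf j q < T.card) :
    ∃ w : σ → K, (∀ j, w j ∈ T) ∧ MvPolynomial.eval w q ≠ 0 := by
  classical
  set e := Fintype.equivFin σ with hedef
  set q' := MvPolynomial.rename e q with hq'def
  have hq' : q' ≠ 0 := fun h0 =>
    hq (MvPolynomial.rename_injective e e.injective (by rw [← hq'def, h0, map_zero]))
  have hdeg' : ∀ j', MvPolynomial.degreeOf j' q' < T.card := by
    intro j'
    have h := MvPolynomial.degreeOf_rename_of_injective (p := q) e.injective (e.symm j')
    rw [Equiv.apply_symm_apply] at h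
    rw [hq'def, h]
    exact hdeg _
  obtain ⟨w', hw'T, hw'⟩ := grid_fin (Fintype.card σ) q' T hq' hdeg'
  refine ⟨w' ∘ e, fun j => hw'T (e j), ?_⟩
  have h2 : MvPolynomial.eval w' q' = MvPolynomial.eval (w' ∘ e) q :=
    MvPolynomial.eval_rename e w' q
  rwa [h2] at hw'

end Grid

section Deg
variable {K : Type*} [CommSemiring K] {σ τ : Type*}

lemma totalDegree_aeval_le_one (φ : σ → MvPolynomial τ K)
    (hφ : ∀ j, (φ j).totalDegree ≤ 1) (p : MvPolynomial σ K) :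
    (MvPolynomial.aeval φ p).totalDegree ≤ p.totalDegree := by
  classical
  conv_lhs => rw [p.as_sum]
  rw [map_sum]
  refine le_trans (MvPolynomial.totalDegree_finset_sum _ _) ?_
  apply Finset.sup_le
  intro v hv
  rw [MvPolynomial.aeval_monomial]
  refine le_trans (MvPolynomial.totalDegree_mul _ _) ?_
  have h1 : (MvPolynomial.totalDegree
      ((algebraMap K (MvPolynomial τ K)) (MvPolynomial.coeff v p))) = 0 := by
    rw [MvPolynomial.algebraMap_eq]
    exact MvPolynomial.totalDegree_C _
  rw [h1, zero_add]
  have h2 : (v.prod fun i k => φ i ^ k).totalDegree ≤ v.sum fun _ e => e := by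
    rw [Finsupp.prod, Finsupp.sum]
    refine le_trans (MvPolynomial.totalDegree_finset_prod _ _) ?_
    apply Finset.sum_le_sum
    intro i _
    calc (φ i ^ v i).totalDegree ≤ v i * (φ i).totalDegree :=
          MvPolynomial.totalDegree_pow _ _
      _ ≤ v i * 1 := Nat.mul_le_mul_left _ (hφ i)
      _ = v i := Nat.mul_one _
  exact le_trans h2 (MvPolynomial.le_totalDegree hv)

end Deg

section App
variable {F : Type*} [Field F]

lemma key_step {n k : ℕ} (g : Fin k → Fin n → Polynomial F)
    (hP : (∑ i : Fin k, ∏ j : Fin n, toMv j (g i j)) ≠ 0) :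
    ∃ S : Finset (Fin n), S.card + 2 ≤ 2 * k ∧
      (MvPolynomial.aeval (fun j => MvPolynomial.X none +
          if j ∈ S then MvPolynomial.X (some j) else 0)
        (∑ i : Fin k, ∏ j : Fin n, toMv j (g i j)) :
          MvPolynomial (Option (Fin n)) F) ≠ 0 := by
  classical
  set tval : Polynomial F → MvPolynomial (Option (Fin n)) F :=
    fun q => Polynomial.aeval (MvPolynomial.X none) q with htval
  set shiftv : Fin n → Polynomial F → MvPolynomial (Option (Fin n)) F := fun j q =>
    Polynomial.aeval (MvPolynomial.X none + MvPolynomial.X (some j)) q with hshift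
  set I₀ : Finset (Fin k) := Finset.univ.filter (fun i => ∀ j, g i j ≠ 0) with hI₀
  set lam : Fin k → MvPolynomial (Option (Fin n)) F :=
    fun i => ∏ j : Fin n, tval (g i j) with hlam
  set u : Fin k → Fin n → MvPolynomial (Option (Fin n)) F := fun i j =>
    shiftv j (g i j) * ∏ i' ∈ I₀.erase i, tval (g i' j) with hu
  set P := ∑ i : Fin k, ∏ j : Fin n, toMv j (g i j) with hPdef
  set Phi : Finset (Fin n) →
      (MvPolynomial (Fin n) F →ₐ[F] MvPolynomial (Option (Fin n)) F) := fun S =>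
    MvPolynomial.aeval (fun j => MvPolynomial.X none +
      if j ∈ S then MvPolynomial.X (some j) else 0) with hPhi
  -- tval kills only zero
  have htval0 : ∀ q : Polynomial F, tval q = 0 → q = 0 := by
    intro q h0
    have hq : (MvPolynomial.aeval (fun o => Option.elim o Polynomial.X (fun _ => 0)) :
        MvPolynomial (Option (Fin n)) F →ₐ[F] Polynomial F) (tval q) = q := by
      rw [htval]
      rw [← Polynomial.aeval_algHom_apply]
      simp
    rw [h0, map_zero] at hq
    exact hq.symm
  -- Phi on embedded univariate polynomials
  have hPhi_toMv : ∀ (S : Finset (Fin n)) (j : Fin n) (q : Polynomial F),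
      Phi S (toMv j q) = if j ∈ S then shiftv j q else tval q := by
    intro S j q
    rw [hPhi]
    show MvPolynomial.aeval _ (Polynomial.aeval (MvPolynomial.X j) q) = _
    rw [← Polynomial.aeval_algHom_apply, MvPolynomial.aeval_X]
    by_cases hj : j ∈ S
    · rw [if_pos hj, if_pos hj, hshift]
    · rw [if_neg hj, if_neg hj, add_zero, htval]
  have hbranch : ∀ (S : Finset (Fin n)) (i : Fin k),
      Phi S (∏ j : Fin n, toMv j (g i j))
        = (∏ j ∈ S, shiftv j (g i j)) * ∏ j ∈ Finset.univ \ S, tval (g i j) := by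
    intro S i
    rw [map_prod]
    rw [Finset.prod_congr rfl (fun j _ => hPhi_toMv S j (g i j))]
    have h1 : Finset.univ.filter (fun j => j ∈ S) = S := Finset.filter_univ_mem S
    have h2 : Finset.univ.filter (fun j => ¬ j ∈ S) = Finset.univ \ S := by
      rw [Finset.filter_not, Finset.filter_univ_mem]
    rw [Finset.prod_ite, h1, h2]
  have hPhiP : ∀ S : Finset (Fin n),
      Phi S P = ∑ i ∈ I₀, ((∏ j ∈ S, shiftv j (g i j)) *
        ∏ j ∈ Finset.univ \ S, tval (g i j)) := by
    intro S
    rw [hPdef, map_sum, Finset.sum_congr rfl (fun i _ => hbranch S i)]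
    symm
    apply Finset.sum_subset (Finset.subset_univ I₀)
    intro i _ hiI₀
    have hzero : ∃ j₀, g i j₀ = 0 := by
      by_contra hcon
      push_neg at hcon
      exact hiI₀ (Finset.mem_filter.mpr ⟨Finset.mem_univ i, hcon⟩)
    obtain ⟨j₀, hj₀⟩ := hzero
    by_cases hj₀S : j₀ ∈ S
    · apply mul_eq_zero_of_left
      apply Finset.prod_eq_zero hj₀S
      rw [hj₀, hshift]
      simp
    · apply mul_eq_zero_of_right
      apply Finset.prod_eq_zero (Finset.mem_sdiff.mpr ⟨Finset.mem_univ _, hj₀S⟩)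
      rw [hj₀, htval]
      simp
  have hRsum : ∀ S : Finset (Fin n),
      Rsum I₀ lam u S = (∏ j ∈ S, ∏ i' ∈ I₀, tval (g i' j)) * Phi S P := by
    intro S
    rw [hPhiP S]
    unfold Rsum
    rw [Finset.mul_sum]
    refine Finset.sum_congr rfl fun i hi => ?_
    have hsplit : (∏ j : Fin n, tval (g i j))
        = (∏ j ∈ S, tval (g i j)) * ∏ j ∈ Finset.univ \ S, tval (g i j) := by
      rw [mul_comm, Finset.prod_sdiff (Finset.subset_univ S)]
    have hins : (∏ j ∈ S, ∏ i' ∈ I₀, tval (g i' j))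
        = ∏ j ∈ S, (tval (g i j) * ∏ i' ∈ I₀.erase i, tval (g i' j)) :=
      Finset.prod_congr rfl (fun j _ => (Finset.mul_prod_erase I₀ _ hi).symm)
    simp only [hlam, hu]
    rw [hins, hsplit, Finset.prod_mul_distrib, Finset.prod_mul_distrib]
    ring
  have htvalne : ∀ (i' : Fin k), i' ∈ I₀ → ∀ j, tval (g i' j) ≠ 0 := by
    intro i' hi' j h0
    exact (Finset.mem_filter.mp hi').2 j (htval0 _ h0)
  have hlamne : ∀ i ∈ I₀, lam i ≠ 0 := by
    intro i hi
    rw [hlam]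
    exact Finset.prod_ne_zero_iff.mpr (fun j _ => htvalne i hi j)
  have hcSne : ∀ S : Finset (Fin n), (∏ j ∈ S, ∏ i' ∈ I₀, tval (g i' j)) ≠ 0 :=
    fun S => Finset.prod_ne_zero_iff.mpr fun j _ =>
      Finset.prod_ne_zero_iff.mpr fun i' hi' => htvalne i' hi' j
  have hPhiuniv : Phi Finset.univ P = 0 → P = 0 := by
    intro h0
    have hcomp : (MvPolynomial.aeval (fun o => Option.elim o 0 MvPolynomial.X) :
          MvPolynomial (Option (Fin n)) F →ₐ[F] MvPolynomial (Fin n) F).comp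
          (Phi Finset.univ)
        = MvPolynomial.aeval MvPolynomial.X := by
      apply MvPolynomial.algHom_ext
      intro j
      rw [hPhi]
      simp
    have hid : P = (MvPolynomial.aeval (fun o => Option.elim o 0 MvPolynomial.X) :
        MvPolynomial (Option (Fin n)) F →ₐ[F] MvPolynomial (Fin n) F) (Phi Finset.univ P) := by
      have h2 := congrFun (congrArg (fun h => h.toFun) hcomp) P
      simp only [AlgHom.toFun_eq_coe, AlgHom.coe_comp, Function.comp_apply] at h2
      rw [h2]
      rw [MvPolynomial.aeval_X_left]
      rfl
    rw [h0, map_zero] at hid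
    exact hid
  by_contra hcon
  push_neg at hcon
  have htube : ∀ S : Finset (Fin n), S.card + 2 ≤ 2 * I₀.card → Rsum I₀ lam u S = 0 := by
    intro S hS
    have hk0 : I₀.card ≤ k := by
      calc I₀.card ≤ (Finset.univ : Finset (Fin k)).card :=
            Finset.card_le_card (Finset.filter_subset _ _)
        _ = k := by rw [Finset.card_univ, Fintype.card_fin]
    have := hcon S (by omega)
    rw [hRsum S, this, mul_zero]
  have hall := tube_vanish I₀ lam u hlamne htube Finset.univ
  rw [hRsum Finset.univ] at hall
  rcases mul_eq_zero.mp hall with h | h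
  · exact hcSne _ h
  · exact hP (hPhiuniv h)

end App

theorem exists_hitting_set_unmixed_aux
    {F : Type*} [Field F] [Infinite F] :
    ∃ c : ℕ, ∀ n k s : ℕ, 1 ≤ n → 1 ≤ k → 2 ≤ s →
      ∃ H : Finset (Fin n → F), H.card ≤ n ^ (c * k) * s ^ (c * k ^ 3) ∧
        ∀ g : Fin k → Fin n → Polynomial F,
          (∀ i j, (g i j).support.card ≤ s) →
          (∑ i : Fin k, ∏ j : Fin n, toMv j (g i j)).totalDegree ≤ n →
          (∑ i : Fin k, ∏ j : Fin n, toMv j (g i j)) ≠ 0 →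
          ∃ a ∈ H, MvPolynomial.eval a (∑ i : Fin k, ∏ j : Fin n, toMv j (g i j)) ≠ 0 := by
  classical
  refine ⟨20, ?_⟩
  intro n k s hn hk hs
  obtain ⟨T, hT⟩ := Infinite.exists_subset_card_eq F (n + 1)
  set M₀ : ℕ := 2 * k - 1 with hM₀
  have hM₀1 : 1 ≤ M₀ := by omega
  set pt : F → (Fin M₀ → F) → (Fin M₀ → Fin n) → (Fin n → F) :=
    fun c v π => fun j => c + if h : ∃ l, π l = j then v h.choose else 0 with hpt
  set H₁ : Finset (Fin n → F) := T.image (fun c => (fun _ : Fin n => c)) with hH₁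
  set Γ : Finset (F × (Fin M₀ → F) × (Fin M₀ → Fin n)) :=
    T ×ˢ ((Fintype.piFinset fun _ : Fin M₀ => T) ×ˢ
      (Fintype.piFinset fun _ : Fin M₀ => (Finset.univ : Finset (Fin n)))) with hΓ
  set H₂ : Finset (Fin n → F) := Γ.image (fun x => pt x.1 x.2.1 x.2.2) with hH₂
  refine ⟨H₁ ∪ H₂, ?_, ?_⟩
  · -- cardinality bound
    have hc1 : H₁.card ≤ n + 1 := le_trans Finset.card_image_le (le_of_eq hT)
    have hΓcard : Γ.card = (n+1) * ((n+1) ^ M₀ * n ^ M₀) := by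
      rw [hΓ, Finset.card_product, Finset.card_product, hT]
      congr 1
      congr 1
      · rw [Fintype.card_piFinset]
        simp [hT]
      · rw [Fintype.card_piFinset]
        simp
    have hc2 : H₂.card ≤ (n+1) * ((n+1) ^ M₀ * n ^ M₀) := by
      rw [hH₂, ← hΓcard]
      exact Finset.card_image_le
    have hcH : (H₁ ∪ H₂).card ≤ (n+1) + (n+1) * ((n+1) ^ M₀ * n ^ M₀) :=
      le_trans (Finset.card_union_le _ _) (by omega)
    have hstep1 : (n+1) + (n+1) * ((n+1) ^ M₀ * n ^ M₀) ≤ (n+1) ^ (4 * k) := by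
      have hA : n ^ M₀ ≤ (n+1) ^ M₀ := Nat.pow_le_pow_left (by omega) _
      have hB : (n+1) * ((n+1) ^ M₀ * n ^ M₀) ≤ (n+1) ^ (2 * M₀ + 1) := by
        calc (n+1) * ((n+1) ^ M₀ * n ^ M₀)
            ≤ (n+1) * ((n+1) ^ M₀ * (n+1) ^ M₀) := by
              apply Nat.mul_le_mul_left
              exact Nat.mul_le_mul_left _ hA
          _ = (n+1) ^ (2 * M₀ + 1) := by
              rw [← pow_add]
              rw [← pow_succ']
              congr 1
              ring
      have hD : (n+1) ≤ (n+1) ^ (2 * M₀ + 1) := by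
        calc (n+1) = (n+1) ^ 1 := (pow_one _).symm
          _ ≤ (n+1) ^ (2 * M₀ + 1) := Nat.pow_le_pow_right (by omega) (by omega)
      calc (n+1) + (n+1) * ((n+1) ^ M₀ * n ^ M₀)
          ≤ (n+1) ^ (2*M₀+1) + (n+1) ^ (2*M₀+1) := by omega
        _ = (n+1) ^ (2*M₀+1) * 2 := by ring
        _ ≤ (n+1) ^ (2*M₀+1) * (n+1) := Nat.mul_le_mul_left _ (by omega)
        _ = (n+1) ^ (2*M₀+1+1) := (pow_succ _ _).symm
        _ = (n+1) ^ (4*k) := by congr 1; omega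
    have hstep2 : (n+1) ^ (4*k) ≤ n ^ (20*k) * s ^ (20*k^3) := by
      rcases Nat.lt_or_ge n 2 with h2 | h2
      · have hn1 : n = 1 := by omega
        subst hn1
        have hk3 : 4 * k ≤ 20 * k ^ 3 := by
          have hx : k ≤ k ^ 3 := Nat.le_self_pow (by norm_num) k
          nlinarith
        calc (1+1:ℕ) ^ (4*k) ≤ 2 ^ (20*k^3) := Nat.pow_le_pow_right (by norm_num) hk3
          _ ≤ s ^ (20*k^3) := Nat.pow_le_pow_left hs _
          _ = 1 ^ (20*k) * s ^ (20*k^3) := by rw [one_pow, one_mul]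
      · have hle : (n+1) ≤ n^2 := by nlinarith
        calc (n+1)^(4*k) ≤ (n^2)^(4*k) := Nat.pow_le_pow_left hle _
          _ = n ^ (8*k) := by rw [← pow_mul]; congr 1; ring
          _ ≤ n ^ (20*k) := Nat.pow_le_pow_right (by omega) (by omega)
          _ ≤ n ^ (20*k) * s ^ (20*k^3) :=
              Nat.le_mul_of_pos_right _ (Nat.pow_pos (by omega))
    calc (H₁ ∪ H₂).card ≤ (n+1) + (n+1) * ((n+1) ^ M₀ * n ^ M₀) := hcH
      _ ≤ (n+1) ^ (4*k) := hstep1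
      _ ≤ n ^ (20*k) * s ^ (20*k^3) := hstep2
      _ = n ^ (20 * k) * s ^ (20 * k ^ 3) := rfl
  · -- hitting property
    intro g hsp hdeg hne
    obtain ⟨S, hScard, hPhiS⟩ := key_step g hne
    set P := ∑ i : Fin k, ∏ j : Fin n, toMv j (g i j) with hPdef
    set q : MvPolynomial (Option (Fin n)) F :=
      MvPolynomial.aeval (fun j => MvPolynomial.X none +
        if j ∈ S then MvPolynomial.X (some j) else 0) P with hq
    have hφdeg : ∀ j : Fin n, (MvPolynomial.X (σ := Option (Fin n)) (R := F) none +
        if j ∈ S then MvPolynomial.X (some j) else 0).totalDegree ≤ 1 := by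
      intro j
      by_cases hj : j ∈ S
      · rw [if_pos hj]
        refine le_trans (MvPolynomial.totalDegree_add _ _) ?_
        rw [MvPolynomial.totalDegree_X, MvPolynomial.totalDegree_X]
        simp
      · rw [if_neg hj, add_zero, MvPolynomial.totalDegree_X]
    have hdegq : ∀ o : Option (Fin n), MvPolynomial.degreeOf o q < T.card := by
      intro o
      calc MvPolynomial.degreeOf o q ≤ q.totalDegree :=
            MvPolynomial.degreeOf_le_totalDegree _ _
        _ ≤ P.totalDegree := totalDegree_aeval_le_one _ hφdeg P
        _ ≤ n := hdeg
        _ < T.card := by rw [hT]; omega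
    obtain ⟨w, hwT, hwne⟩ := grid_fintype q T hPhiS hdegq
    set a : Fin n → F := fun j => w none + if j ∈ S then w (some j) else 0 with ha
    have heval : ∀ Pp : MvPolynomial (Fin n) F,
        MvPolynomial.eval w (MvPolynomial.aeval (fun j => MvPolynomial.X none +
          if j ∈ S then MvPolynomial.X (some j) else 0) Pp) = MvPolynomial.eval a Pp := by
      intro Pp
      induction Pp using MvPolynomial.induction_on with
      | C c => simp
      | add p1 p2 h1 h2 => simp only [map_add]; rw [h1, h2]
      | mul_X p1 j h1 =>
        rw [map_mul, map_mul, map_mul, h1, MvPolynomial.aeval_X, MvPolynomial.eval_X]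
        congr 1
        simp only [ha, map_add, MvPolynomial.eval_X]
        by_cases hj : j ∈ S
        · rw [if_pos hj, if_pos hj, MvPolynomial.eval_X]
        · rw [if_neg hj, if_neg hj, map_zero]
    have haH : a ∈ H₁ ∪ H₂ := by
      by_cases hSemp : S = ∅
      · apply Finset.mem_union_left
        rw [hH₁]
        apply Finset.mem_image.mpr
        refine ⟨w none, hwT none, ?_⟩
        funext j
        rw [ha]
        simp [hSemp]
      · apply Finset.mem_union_right
        rw [hH₂]
        apply Finset.mem_image.mpr
        have hSM : S.card ≤ M₀ := by omega
        obtain ⟨j₀, hj₀⟩ := Finset.nonempty_iff_ne_empty.mpr hSemp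
        set π : Fin M₀ → Fin n := fun l => if h : (l : ℕ) < S.card
          then S.orderEmbOfFin rfl ⟨l, h⟩ else j₀ with hπ
        have hπS : ∀ l, π l ∈ S := by
          intro l
          rw [hπ]
          dsimp only
          split
          · exact Finset.orderEmbOfFin_mem S rfl _
          · exact hj₀
        have hπsurj : ∀ j ∈ S, ∃ l, π l = j := by
          intro j hj
          have hr : j ∈ Set.range (S.orderEmbOfFin rfl) := by
            rw [Finset.range_orderEmbOfFin]
            exact hj
          obtain ⟨i, hi⟩ := hr
          have hi2 : (i : ℕ) < M₀ := lt_of_lt_of_le i.2 hSM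
          refine ⟨⟨(i : ℕ), hi2⟩, ?_⟩
          rw [hπ]
          dsimp only
          rw [dif_pos (show ((⟨(i : ℕ), hi2⟩ : Fin M₀) : ℕ) < S.card from i.2)]
          exact hi
        set v : Fin M₀ → F := fun l => w (some (π l)) with hv
        refine ⟨(w none, v, π), ?_, ?_⟩
        · rw [hΓ]
          rw [Finset.mem_product]
          refine ⟨hwT none, ?_⟩
          rw [Finset.mem_product]
          constructor
          · exact Fintype.mem_piFinset.mpr (fun l => hwT (some (π l)))
          · exact Fintype.mem_piFinset.mpr (fun l => Finset.mem_univ _)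
        · funext j
          show pt (w none) v π j = a j
          rw [hpt, ha]
          dsimp only
          by_cases hj : j ∈ S
          · obtain ⟨l, hl⟩ := hπsurj j hj
            have hex : ∃ l', π l' = j := ⟨l, hl⟩
            rw [dif_pos hex, if_pos hj, hv]
            dsimp only
            rw [hex.choose_spec]
          · have hex : ¬ ∃ l', π l' = j := by
              rintro ⟨l', rfl⟩
              exact hj (hπS l')
            rw [dif_neg hex, if_neg hj]
    refine ⟨a, haH, ?_⟩
    have h2 := heval P
    rw [← hq] at h2
    rw [← h2]
    exact hwne


/-- Theorem 4.2. Over an infinite field there is an absolute constant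
`c` such that for all `n, k ≥ 1` and `s ≥ 2` there is a hitting set
`H ⊆ F^n` with `|H| ≤ n^(c·k) · s^(c·k³)` for the class of low degree unmixed
ΣΠΣΠ(k) circuits of size `s` in `n` variables. -/
theorem exists_hitting_set_unmixed
    {F : Type*} [Field F] [Infinite F] :
    ∃ c : ℕ, ∀ n k s : ℕ, 1 ≤ n → 1 ≤ k → 2 ≤ s →
      ∃ H : Finset (Fin n → F), H.card ≤ n ^ (c * k) * s ^ (c * k ^ 3) ∧
        ∀ g : Fin k → Fin n → Polynomial F,
          (∀ i j, (g i j).support.card ≤ s) →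
          (∑ i : Fin k, ∏ j : Fin n, toMv j (g i j)).totalDegree ≤ n →
          (∑ i : Fin k, ∏ j : Fin n, toMv j (g i j)) ≠ 0 →
          ∃ a ∈ H, MvPolynomial.eval a (∑ i : Fin k, ∏ j : Fin n, toMv j (g i j)) ≠ 0 :=
  exists_hitting_set_unmixed_aux
end

section
/- Let F be an infinite field. For all n ≥ 2 and s ≥ 2 there exists a generator L_s = (L_{1,s},…,L_{n,s}): F^q → F^n for the class of s-sparse polynomials in F[x_1,…,x_n] of total degree at most poly(n), such that each component L_{i,s} has individual degree at most n−1 in each of its variables and q = O(log_n s) (i.e., q ≤ c·(1 + log_n s) for an absolute constant c). -/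
open MvPolynomial Finset

attribute [local instance 10] Classical.propDecidable

namespace SparseGenAux


/-- Weights making the weighted-degree map injective on `S`. -/
def GoodW {n : ℕ} (N : ℕ) (S : Finset (Fin n →₀ ℕ)) (w : Fin n → Fin N) : Prop :=
  ∀ m ∈ S, ∀ m' ∈ S,
    (∑ i, (m i : ℕ) * (w i : ℕ)) = (∑ i, (m' i : ℕ) * (w i : ℕ)) → m = m'

lemma exists_goodW {n N : ℕ} (hn : 0 < n) (S : Finset (Fin n →₀ ℕ))
    (hcard : S.card * S.card < N) : ∃ w : Fin n → Fin N, GoodW N S w := by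
  have hN : 0 < N := lt_of_le_of_lt (Nat.zero_le _) hcard
  by_contra hall
  push_neg at hall
  -- every w admits a bad pair
  have hbad : ∀ w : Fin n → Fin N, ∃ m ∈ S, ∃ m' ∈ S, m ≠ m' ∧
      (∑ i, (m i : ℕ) * (w i : ℕ)) = (∑ i, (m' i : ℕ) * (w i : ℕ)) := by
    intro w
    have := hall w
    simp only [GoodW, not_forall] at this
    obtain ⟨m, hm, m', hm', heq, hne⟩ := this
    exact ⟨m, hm, m', hm', hne, heq⟩
  classical
  set Bad : (Fin n → Fin N) → Prop := fun w => ∃ m ∈ S, ∃ m' ∈ S, m ≠ m' ∧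
      (∑ i, (m i : ℕ) * (w i : ℕ)) = (∑ i, (m' i : ℕ) * (w i : ℕ)) with hBad
  set PP : Finset ((Fin n →₀ ℕ) × (Fin n →₀ ℕ)) := (S ×ˢ S).filter fun p => p.1 ≠ p.2 with hPP
  set Z : ((Fin n →₀ ℕ) × (Fin n →₀ ℕ)) → Finset (Fin n → Fin N) := fun p =>
    univ.filter fun w => (∑ i, (p.1 i : ℕ) * (w i : ℕ)) = (∑ i, (p.2 i : ℕ) * (w i : ℕ)) with hZ
  have hsub : (univ : Finset (Fin n → Fin N)) ⊆ PP.biUnion Z := by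
    intro w _
    obtain ⟨m, hm, m', hm', hne, heq⟩ := hbad w
    rw [Finset.mem_biUnion]
    exact ⟨(m, m'), by simp [hPP, Finset.mem_filter, Finset.mem_product, hm, hm', hne],
      by simp [hZ, heq]⟩
  have hZcard : ∀ p ∈ PP, (Z p).card ≤ N ^ (n - 1) := by
    rintro ⟨m, m'⟩ hp
    simp only [hPP, Finset.mem_filter, Finset.mem_product] at hp
    obtain ⟨⟨hm, hm'⟩, hne⟩ := hp
    obtain ⟨i0, hi0⟩ : ∃ i0, m i0 ≠ m' i0 := by
      by_contra hc; push_neg at hc; exact hne (Finsupp.ext hc)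
    have hcodom : Fintype.card ({i : Fin n // i ≠ i0} → Fin N) = N ^ (n - 1) := by
      have hne' : Fintype.card {i : Fin n // i ≠ i0} = n - 1 := by
        have := Fintype.card_subtype_compl (fun i : Fin n => i = i0)
        simp only [Fintype.card_subtype_eq, Fintype.card_fin] at this
        convert this using 2
      rw [Fintype.card_fun, hne', Fintype.card_fin]
    calc (Z (m, m')).card ≤ (univ : Finset ({i : Fin n // i ≠ i0} → Fin N)).card := by
          apply Finset.card_le_card_of_injOn (fun w i => w i.1) (fun a _ => Finset.mem_univ _)
          intro w hw w' hw' hproj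
          simp only [hZ, Finset.coe_filter, Set.mem_setOf_eq, Finset.mem_univ, true_and] at hw hw'
          have hoff : ∀ i, i ≠ i0 → w i = w' i := fun i hi => congrFun hproj ⟨i, hi⟩
          have h1 : ∑ i, ((m i : ℤ) - (m' i : ℤ)) * (w i : ℤ) = 0 := by
            have : (∑ i, (m i : ℤ) * (w i : ℤ)) = ∑ i, (m' i : ℤ) * (w i : ℤ) := by
              exact_mod_cast hw
            rw [← sub_eq_zero] at this
            rw [← this, ← Finset.sum_sub_distrib]
            exact Finset.sum_congr rfl fun i _ => by ring
          have h2 : ∑ i, ((m i : ℤ) - (m' i : ℤ)) * (w' i : ℤ) = 0 := by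
            have : (∑ i, (m i : ℤ) * (w' i : ℤ)) = ∑ i, (m' i : ℤ) * (w' i : ℤ) := by
              exact_mod_cast hw'
            rw [← sub_eq_zero] at this
            rw [← this, ← Finset.sum_sub_distrib]
            exact Finset.sum_congr rfl fun i _ => by ring
          have h3 : ∑ i, ((m i : ℤ) - (m' i : ℤ)) * ((w i : ℤ) - (w' i : ℤ)) = 0 := by
            have : ∑ i, ((m i : ℤ) - (m' i : ℤ)) * ((w i : ℤ) - (w' i : ℤ)) =
                (∑ i, ((m i : ℤ) - (m' i : ℤ)) * (w i : ℤ)) -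
                  ∑ i, ((m i : ℤ) - (m' i : ℤ)) * (w' i : ℤ) := by
              rw [← Finset.sum_sub_distrib]
              exact Finset.sum_congr rfl fun i _ => by ring
            rw [this, h1, h2, sub_zero]
          rw [Finset.sum_eq_single i0 (fun b _ hb => by rw [hoff b hb]; ring)
            (fun h => absurd (Finset.mem_univ i0) h)] at h3
          have hfac : ((m i0 : ℤ) - (m' i0 : ℤ)) ≠ 0 := by
            intro h; apply hi0; exact_mod_cast sub_eq_zero.mp h
          have : (w i0 : ℤ) = (w' i0 : ℤ) := by
            rcases mul_eq_zero.mp h3 with h | h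
            · exact absurd h hfac
            · exact sub_eq_zero.mp h
          have hwi0 : w i0 = w' i0 := by
            apply Fin.ext; exact_mod_cast this
          funext i
          by_cases hi : i = i0
          · subst hi; exact hwi0
          · exact hoff i hi
      _ = N ^ (n - 1) := by rw [Finset.card_univ, hcodom]
  have hfinal : N ^ n < N ^ n := by
    calc N ^ n = (univ : Finset (Fin n → Fin N)).card := by
          rw [Finset.card_univ, Fintype.card_fun, Fintype.card_fin, Fintype.card_fin]
      _ ≤ (PP.biUnion Z).card := Finset.card_le_card hsub
      _ ≤ ∑ p ∈ PP, (Z p).card := Finset.card_biUnion_le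
      _ ≤ ∑ _p ∈ PP, N ^ (n - 1) := Finset.sum_le_sum hZcard
      _ = PP.card * N ^ (n - 1) := by rw [Finset.sum_const, smul_eq_mul]
      _ ≤ (S.card * S.card) * N ^ (n - 1) := by
          apply Nat.mul_le_mul_right
          calc PP.card ≤ (S ×ˢ S).card := Finset.card_le_card (Finset.filter_subset _ _)
            _ = S.card * S.card := Finset.card_product _ _
      _ < N * N ^ (n - 1) := by
          exact (Nat.mul_lt_mul_right (pow_pos hN _)).mpr hcard
      _ = N ^ n := by
          rw [← pow_succ']
          congr 1
          omega
  exact absurd hfinal (lt_irrefl _)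



variable (F : Type*) [Field F]

/-- exponent function to finsupp -/
noncomputable def fe (n q : ℕ) (e : Fin q → Fin n) : Fin q →₀ ℕ :=
  Finsupp.equivFunOnFinite.symm fun j => (e j : ℕ)

/-- generic generator component with coefficient variables -/
noncomputable def Lbig (n q : ℕ) (i : Fin n) :
    MvPolynomial (Fin q) (MvPolynomial (Fin n × (Fin q → Fin n)) F) :=
  ∑ e : Fin q → Fin n, monomial (fe n q e) (X (i, e))

noncomputable def Qbig (n q : ℕ) (m : Fin n →₀ ℕ) :
    MvPolynomial (Fin q) (MvPolynomial (Fin n × (Fin q → Fin n)) F) :=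
  ∏ i, (Lbig F n q i) ^ (m i)

noncomputable def wS (n q : ℕ) (S : Finset (Fin n →₀ ℕ)) : Fin n → Fin (n ^ q) :=
  if h : ∃ w, GoodW (n ^ q) S w then h.choose else fun i => ⟨0, pow_pos i.pos q⟩

noncomputable def dS (n q : ℕ) (S : Finset (Fin n →₀ ℕ)) (i : Fin n) : Fin q → Fin n :=
  finFunctionFinEquiv.symm (wS n q S i)

noncomputable def ES (n q : ℕ) (S : Finset (Fin n →₀ ℕ)) (m : Fin n →₀ ℕ) : Fin q →₀ ℕ :=
  ∑ i, m i • fe n q (dS n q S i)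

noncomputable def MatS (n q : ℕ) (S : Finset (Fin n →₀ ℕ)) :
    Matrix {x // x ∈ S} {x // x ∈ S} (MvPolynomial (Fin n × (Fin q → Fin n)) F) :=
  fun m m' => coeff (ES n q S m'.1) (Qbig F n q m.1)

noncomputable def DS (n q : ℕ) (S : Finset (Fin n →₀ ℕ)) :
    MvPolynomial (Fin n × (Fin q → Fin n)) F :=
  (MatS F n q S).det

lemma goodW_wS {n q : ℕ} {S : Finset (Fin n →₀ ℕ)} (h : ∃ w, GoodW (n ^ q) S w) :
    GoodW (n ^ q) S (wS n q S) := by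
  rw [wS, dif_pos h]; exact h.choose_spec

lemma fe_apply (n q : ℕ) (e : Fin q → Fin n) (j : Fin q) : fe n q e j = (e j : ℕ) :=
  congrFun (Finsupp.coe_equivFunOnFinite_symm _) _

lemma ES_apply (n q : ℕ) (S : Finset (Fin n →₀ ℕ)) (m : Fin n →₀ ℕ) (j : Fin q) :
    ES n q S m j = ∑ i, m i * (dS n q S i j : ℕ) := by
  rw [ES, Finsupp.finset_sum_apply]
  exact Finset.sum_congr rfl fun i _ => by
    rw [Finsupp.smul_apply, fe_apply, smul_eq_mul]

lemma wS_eq_sum (n q : ℕ) (S : Finset (Fin n →₀ ℕ)) (i : Fin n) :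
    (wS n q S i : ℕ) = ∑ j, (dS n q S i j : ℕ) * n ^ (j : ℕ) := by
  have h := finFunctionFinEquiv_apply (dS n q S i)
  rw [dS, Equiv.apply_symm_apply] at h
  exact h

lemma ES_inj {n q : ℕ} {S : Finset (Fin n →₀ ℕ)} (h : GoodW (n ^ q) S (wS n q S))
    {m m' : Fin n →₀ ℕ} (hm : m ∈ S) (hm' : m' ∈ S)
    (he : ES n q S m = ES n q S m') : m = m' := by
  apply h m hm m' hm'
  have key : ∀ mm : Fin n →₀ ℕ,
      (∑ i, (mm i : ℕ) * (wS n q S i : ℕ)) = ∑ j : Fin q, (ES n q S mm j) * n ^ (j : ℕ) := by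
    intro mm
    simp_rw [ES_apply, Finset.sum_mul, wS_eq_sum, Finset.mul_sum]
    rw [Finset.sum_comm]
    exact Finset.sum_congr rfl fun j _ => Finset.sum_congr rfl fun i _ => by ring
  rw [key m, key m', he]

lemma prod_monomial_one {R ι σ : Type*} [CommSemiring R] (t : Finset ι) (h : ι → (σ →₀ ℕ)) :
    (∏ i ∈ t, monomial (h i) (1 : R)) = monomial (∑ i ∈ t, h i) 1 := by
  classical
  induction t using Finset.induction_on with
  | empty => simp
  | insert _ _ hx ih => rw [Finset.prod_insert hx, Finset.sum_insert hx, ih, monomial_mul, one_mul]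

/-- the special point: indicator of the chosen monomial substitution -/
noncomputable def alpha0 (n q : ℕ) (S : Finset (Fin n →₀ ℕ)) :
    (Fin n × (Fin q → Fin n)) → F :=
  fun p => if p.2 = dS n q S p.1 then 1 else 0

lemma map_Lbig_alpha0 (n q : ℕ) (S : Finset (Fin n →₀ ℕ)) (i : Fin n) :
    MvPolynomial.map (eval (alpha0 F n q S)) (Lbig F n q i) =
      monomial (fe n q (dS n q S i)) (1 : F) := by
  rw [Lbig, map_sum]
  have h1 : ∀ e : Fin q → Fin n,
      MvPolynomial.map (eval (alpha0 F n q S)) (monomial (fe n q e) (X (i, e))) =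
        if e = dS n q S i then monomial (fe n q e) (1 : F) else 0 := by
    intro e
    rw [map_monomial, eval_X]
    show monomial (fe n q e) (if e = dS n q S i then (1:F) else 0) = _
    split <;> simp
  simp_rw [h1]
  rw [Finset.sum_ite_eq' Finset.univ (dS n q S i) (fun e => monomial (fe n q e) (1 : F))]
  simp

lemma map_Qbig_alpha0 (n q : ℕ) (S : Finset (Fin n →₀ ℕ)) (m : Fin n →₀ ℕ) :
    MvPolynomial.map (eval (alpha0 F n q S)) (Qbig F n q m) =
      monomial (ES n q S m) (1 : F) := by
  rw [Qbig, map_prod]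
  simp_rw [map_pow, map_Lbig_alpha0, monomial_pow, one_pow]
  rw [prod_monomial_one]
  rfl

lemma DS_ne_zero {n q : ℕ} (S : Finset (Fin n →₀ ℕ)) (h : ∃ w, GoodW (n ^ q) S w) :
    DS F n q S ≠ 0 := by
  intro h0
  have hg := goodW_wS h
  have h1 : eval (alpha0 F n q S) (DS F n q S) =
      ((MatS F n q S).map (eval (alpha0 F n q S))).det := RingHom.map_det _ _
  have h2 : (MatS F n q S).map (eval (alpha0 F n q S)) = 1 := by
    ext m m'
    rw [Matrix.map_apply, Matrix.one_apply]
    show eval (alpha0 F n q S) (coeff (ES n q S m'.1) (Qbig F n q m.1)) = _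
    rw [← coeff_map, map_Qbig_alpha0, coeff_monomial]
    by_cases hmm : m = m'
    · subst hmm; simp
    · rw [if_neg hmm, if_neg]
      intro hEq
      exact hmm (Subtype.ext (ES_inj hg m.2 m'.2 hEq))
  have : (0 : F) = 1 := by
    have := h1
    rw [h0, map_zero, h2, Matrix.det_one] at this
    exact this
  exact zero_ne_one this

lemma degreeOf_L_le (n q : ℕ) (α : (Fin n × (Fin q → Fin n)) → F) (i : Fin n) (v : Fin q) :
    (MvPolynomial.map (eval α) (Lbig F n q i)).degreeOf v ≤ n - 1 := by
  rw [MvPolynomial.degreeOf_le_iff]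
  intro mm hmm
  rw [Lbig, map_sum] at hmm
  simp_rw [map_monomial] at hmm
  have h1 := MvPolynomial.support_sum hmm
  rw [Finset.mem_biUnion] at h1
  obtain ⟨e, -, he⟩ := h1
  have h2 := MvPolynomial.support_monomial_subset he
  rw [Finset.mem_singleton] at h2
  subst h2
  rw [fe_apply]
  have := (e v).isLt
  omega


end SparseGenAux

open SparseGenAux

/-- Lemma 2.4. Over an infinite field, for all `n ≥ 2` and `s ≥ 2`
there is a generator `L : F^q → F^n` for `s`-sparse low degree polynomials whose
components have individual degree at most `n − 1` in each variable and with
`q = O(log_n s)`, i.e. `q ≤ c·(1 + log_n s)` for an absolute constant `c`. -/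
theorem exists_sparse_generator
    {F : Type*} [Field F] [Infinite F] :
    ∃ c : ℕ, ∀ n s : ℕ, 2 ≤ n → 2 ≤ s →
      ∃ (q : ℕ) (L : Fin n → MvPolynomial (Fin q) F),
        q ≤ c * (1 + Nat.log n s) ∧
        (∀ i v, (L i).degreeOf v ≤ n - 1) ∧
        ∀ P : MvPolynomial (Fin n) F, P ≠ 0 → sparsity P ≤ s → P.totalDegree ≤ n →
          MvPolynomial.aeval L P ≠ 0 := by
  refine ⟨2, fun n s hn hs => ?_⟩
  set k : ℕ := Nat.log n s + 1 with hk
  set q : ℕ := 2 * k with hqdef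
  have hq : q ≤ 2 * (1 + Nat.log n s) := by omega
  have hss : s * s < n ^ q := by
    have h1 : s < n ^ k := Nat.lt_pow_succ_log_self (by omega) s
    calc s * s < n ^ k * n ^ k := Nat.mul_lt_mul'' h1 h1
      _ = n ^ q := by rw [← pow_add]; congr 1; omega
  -- the box of admissible exponent vectors
  set nbox : Fin n →₀ ℕ := Finsupp.equivFunOnFinite.symm (fun _ : Fin n => n) with hnbox
  set 𝒮 : Finset (Finset (Fin n →₀ ℕ)) :=
    (Finset.Iic nbox).powerset.filter (fun S => S.card ≤ s) with h𝒮
  have hGoodExists : ∀ S ∈ 𝒮, ∃ w, GoodW (n ^ q) S w := by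
    intro S hS
    rw [h𝒮, Finset.mem_filter] at hS
    exact exists_goodW (by omega) S
      (lt_of_le_of_lt (Nat.mul_le_mul hS.2 hS.2) hss)
  set G : MvPolynomial (Fin n × (Fin q → Fin n)) F := ∏ S ∈ 𝒮, DS F n q S with hG
  have hGne : G ≠ 0 := by
    rw [hG, Finset.prod_ne_zero_iff]
    exact fun S hS => DS_ne_zero F S (hGoodExists S hS)
  obtain ⟨α, hα⟩ : ∃ α : (Fin n × (Fin q → Fin n)) → F, eval α G ≠ 0 := by
    by_contra hc
    push_neg at hc
    exact hGne (MvPolynomial.funext fun x => by rw [hc x, map_zero])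
  refine ⟨q, fun i => MvPolynomial.map (eval α) (Lbig F n q i), hq,
    fun i v => degreeOf_L_le F n q α i v, ?_⟩
  intro P hP hsp hdeg hzero
  set S : Finset (Fin n →₀ ℕ) := P.support with hSdef
  have hS𝒮 : S ∈ 𝒮 := by
    rw [h𝒮, Finset.mem_filter, Finset.mem_powerset]
    refine ⟨fun m hm => ?_, hsp⟩
    rw [Finset.mem_Iic, Finsupp.le_def]
    intro i
    have h1 : m i ≤ m.sum fun _ e => e := by
      by_cases h0 : i ∈ m.support
      · exact Finset.single_le_sum (f := fun j => m j) (fun _ _ => Nat.zero_le _) h0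
      · simp [Finsupp.notMem_support_iff.mp h0]
    have h2 : (nbox : Fin n →₀ ℕ) i = n := congrFun (Finsupp.coe_equivFunOnFinite_symm _) _
    rw [h2]
    exact h1.trans ((MvPolynomial.le_totalDegree hm).trans hdeg)
  have hg := goodW_wS (hGoodExists S hS𝒮)
  have hDSα : eval α (DS F n q S) ≠ 0 := by
    intro h0
    apply hα
    rw [hG, map_prod]
    exact Finset.prod_eq_zero hS𝒮 h0
  set M : Matrix {x // x ∈ S} {x // x ∈ S} F := (MatS F n q S).map (eval α) with hM
  have hdet : IsUnit M.det := by
    have h1 : eval α (DS F n q S) = M.det := RingHom.map_det _ _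
    rw [← h1]
    exact isUnit_iff_ne_zero.mpr hDSα
  set c : {x // x ∈ S} → F := fun m => coeff m.1 P with hc
  have hvec : Matrix.vecMul c M = 0 := by
    funext m'
    have hco : coeff (ES n q S m'.1)
        (MvPolynomial.aeval (fun i => MvPolynomial.map (eval α) (Lbig F n q i)) P) = 0 := by
      rw [hzero]; exact coeff_zero _
    rw [MvPolynomial.aeval_def, MvPolynomial.eval₂_eq', coeff_sum] at hco
    simp_rw [MvPolynomial.algebraMap_eq, coeff_C_mul] at hco
    have hprod : ∀ d : Fin n →₀ ℕ,
        (∏ i, (MvPolynomial.map (eval α) (Lbig F n q i)) ^ (d i)) =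
          MvPolynomial.map (eval α) (Qbig F n q d) := by
      intro d
      rw [Qbig, map_prod]
      simp_rw [map_pow]
    simp_rw [hprod, coeff_map] at hco
    show ∑ m : {x // x ∈ S}, c m * M m m' = 0
    rw [Finset.univ_eq_attach]
    calc ∑ m ∈ S.attach, c m * M m m'
        = ∑ d ∈ S, coeff d P * eval α (coeff (ES n q S m'.1) (Qbig F n q d)) :=
          Finset.sum_attach S (fun d => coeff d P * eval α (coeff (ES n q S m'.1) (Qbig F n q d)))
      _ = 0 := hco
  have hc0 : c = 0 := by
    have h1 := congrArg (fun v => Matrix.vecMul v M⁻¹) hvec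
    simpa [Matrix.vecMul_vecMul, Matrix.mul_nonsing_inv _ hdet, Matrix.vecMul_one,
      Matrix.zero_vecMul] using h1
  obtain ⟨m0, hm0⟩ := MvPolynomial.support_nonempty.mpr hP
  have : coeff m0 P = 0 := congrFun hc0 ⟨m0, hm0⟩
  exact (MvPolynomial.mem_support_iff.mp hm0) this
end
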